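/- arXiv:1505.04132 — 5 statements merged into one kernel-verified Lean document; each statement's English description precedes it below -/
import Mathlib

section
/- For every m > 0 and s ∈ (0,1), the absolute value of the integral term satisfies |∫_{-1}^{1} t ∫_0^∞ p^s/(p^2+1+(2/(m+1))tp) dp dt| ≤ (4/m) ∫_0^∞ p^{s+1}/(p^2+1)^2 dp. -/
/-!
Write `F t = ∫₀^∞ p^s / (p² + 1 + c t p) dp` with `c = 2/(m+1)`, and `B = F 0`.
Since `∫₋₁¹ t dt = 0`, the integral equals `∫₋₁¹ t (F t - B) dt`. For `|t| ≤ 1` the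
denominator is at least `(1 - c/2)(p² + 1) = (m/(m+1))(p² + 1)` because `2|p| ≤ p² + 1`, so
`|F t - B| ≤ (c / (1 - c/2)) |t| ∫₀^∞ p^(s+1) / (p² + 1)² dp`, with `c / (1 - c/2) = 2/m`;
integrating over an interval of length `2` gives the factor `4/m`.
-/

open MeasureTheory intervalIntegral Real

lemma integrableOn_Ioi_rpow_div_sq_add_one_pow {a : ℝ} {k : ℕ} (ha : 0 ≤ a)
    (hak : a < 2 * k - 1) :
    IntegrableOn (fun p : ℝ => p ^ a / (p ^ 2 + 1) ^ k) (Set.Ioi 0) := by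
  have hcont : Continuous fun p : ℝ => p ^ a / (p ^ 2 + 1) ^ k :=
    (continuous_rpow_const ha).div (by fun_prop) fun p => by positivity
  rw [← Set.Ioc_union_Ioi_eq_Ioi zero_le_one]
  refine IntegrableOn.union ((hcont.continuousOn.integrableOn_compact isCompact_Icc).mono_set
    Set.Ioc_subset_Icc_self) ?_
  refine (integrableOn_Ioi_rpow_of_lt (show a - 2 * k < -1 by linarith) one_pos).mono'
    hcont.aestronglyMeasurable ?_
  filter_upwards [ae_restrict_mem measurableSet_Ioi] with p (hp : 1 < p)
  have hp0 : 0 < p := one_pos.trans hp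
  rw [norm_of_nonneg (by positivity), rpow_sub hp0,
    show (2 * k : ℝ) = ((2 * k : ℕ) : ℝ) by push_cast; ring, rpow_natCast, pow_mul]
  gcongr
  linarith

section Kernel

variable {c t : ℝ}

lemma one_sub_half_mul_le (hc : 0 ≤ c) (ht : |t| ≤ 1) (p : ℝ) :
    (1 - c / 2) * (p ^ 2 + 1) ≤ p ^ 2 + 1 + c * t * p := by
  have htp : |t * p| ≤ (p ^ 2 + 1) / 2 := by
    rw [abs_mul]
    nlinarith [abs_nonneg p, sq_abs p, sq_nonneg (|p| - 1)]
  nlinarith [neg_abs_le (t * p)]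

lemma sq_add_one_add_mul_pos (hc : 0 ≤ c) (hc2 : c < 2) (ht : |t| ≤ 1) (p : ℝ) :
    0 < p ^ 2 + 1 + c * t * p :=
  (mul_pos (by linarith) (by positivity)).trans_le (one_sub_half_mul_le hc ht p)

lemma rpow_div_sq_add_one_add_mul_le (hc : 0 ≤ c) (hc2 : c < 2) (ht : |t| ≤ 1) (s : ℝ)
    {p : ℝ} (hp : 0 < p) :
    p ^ s / (p ^ 2 + 1 + c * t * p) ≤ (1 - c / 2)⁻¹ * (p ^ s / (p ^ 2 + 1)) := by
  calc p ^ s / (p ^ 2 + 1 + c * t * p) ≤ p ^ s / ((1 - c / 2) * (p ^ 2 + 1)) := by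
        gcongr
        · exact mul_pos (by linarith) (by positivity)
        · exact one_sub_half_mul_le hc ht p
    _ = (1 - c / 2)⁻¹ * (p ^ s / (p ^ 2 + 1)) := by
        rw [mul_comm, ← div_div, div_eq_inv_mul]

lemma abs_rpow_div_sq_add_one_add_mul_sub_le (hc : 0 ≤ c) (hc2 : c < 2) (ht : |t| ≤ 1)
    (s : ℝ) {p : ℝ} (hp : 0 < p) :
    |p ^ s / (p ^ 2 + 1 + c * t * p) - p ^ s / (p ^ 2 + 1)| ≤
      c / (1 - c / 2) * |t| * (p ^ (s + 1) / (p ^ 2 + 1) ^ 2) := by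
  have hA : 0 < p ^ 2 + 1 := by positivity
  have hD := sq_add_one_add_mul_pos hc hc2 ht p
  have hκ : 0 < 1 - c / 2 := by linarith
  have hdiff : p ^ s / (p ^ 2 + 1 + c * t * p) - p ^ s / (p ^ 2 + 1) =
      -(c * t * p ^ (s + 1)) / ((p ^ 2 + 1 + c * t * p) * (p ^ 2 + 1)) := by
    rw [rpow_add_one hp.ne', div_sub_div _ _ hD.ne' hA.ne']
    ring
  rw [hdiff, abs_div, abs_neg, abs_mul, abs_mul, abs_of_nonneg hc,
    abs_of_pos (rpow_pos_of_pos hp _), abs_of_pos (mul_pos hD hA)]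
  calc c * |t| * p ^ (s + 1) / ((p ^ 2 + 1 + c * t * p) * (p ^ 2 + 1))
      ≤ c * |t| * p ^ (s + 1) / ((1 - c / 2) * (p ^ 2 + 1) * (p ^ 2 + 1)) := by
        gcongr
        exact one_sub_half_mul_le hc ht p
    _ = c / (1 - c / 2) * |t| * (p ^ (s + 1) / (p ^ 2 + 1) ^ 2) := by
        field_simp

variable {s : ℝ}

lemma integrableOn_Ioi_rpow_div_sq_add_one_add_mul (hs0 : 0 ≤ s) (hs1 : s < 1) (hc : 0 ≤ c)
    (hc2 : c < 2) (ht : |t| ≤ 1) :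
    IntegrableOn (fun p : ℝ => p ^ s / (p ^ 2 + 1 + c * t * p)) (Set.Ioi 0) := by
  have hB := integrableOn_Ioi_rpow_div_sq_add_one_pow (k := 1) hs0 (by push_cast; linarith)
  simp only [pow_one] at hB
  refine (hB.const_mul (1 - c / 2)⁻¹).mono' ?_ ?_
  · exact ((continuous_rpow_const hs0).continuousOn.div (by fun_prop)
      fun p _ => (sq_add_one_add_mul_pos hc hc2 ht p).ne').aestronglyMeasurable measurableSet_Ioi
  · filter_upwards [ae_restrict_mem measurableSet_Ioi] with p (hp : 0 < p)
    rw [norm_of_nonneg (div_nonneg (by positivity) (sq_add_one_add_mul_pos hc hc2 ht p).le)]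
    exact rpow_div_sq_add_one_add_mul_le hc hc2 ht s hp

lemma abs_integral_rpow_div_sq_add_one_add_mul_sub_le (hs0 : 0 ≤ s) (hs1 : s < 1)
    (hc : 0 ≤ c) (hc2 : c < 2) (ht : |t| ≤ 1) :
    |(∫ p in Set.Ioi 0, p ^ s / (p ^ 2 + 1 + c * t * p)) -
        ∫ p in Set.Ioi 0, p ^ s / (p ^ 2 + 1)| ≤
      c / (1 - c / 2) * |t| * ∫ p in Set.Ioi 0, p ^ (s + 1) / (p ^ 2 + 1) ^ 2 := by
  have hB := integrableOn_Ioi_rpow_div_sq_add_one_add_mul hs0 hs1 hc hc2 (t := 0) (by simp)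
  simp only [mul_zero, zero_mul, add_zero] at hB
  have hI := integrableOn_Ioi_rpow_div_sq_add_one_pow (k := 2) (a := s + 1) (by linarith)
    (by push_cast; linarith)
  rw [← integral_sub (integrableOn_Ioi_rpow_div_sq_add_one_add_mul hs0 hs1 hc hc2 ht) hB,
    ← MeasureTheory.integral_const_mul, ← norm_eq_abs]
  refine norm_integral_le_of_norm_le (hI.const_mul _) ?_
  filter_upwards [ae_restrict_mem measurableSet_Ioi] with p (hp : 0 < p)
  exact abs_rpow_div_sq_add_one_add_mul_sub_le hc hc2 ht s hp

lemma measurable_integral_rpow_div_sq_add_one_add_mul (s c : ℝ) :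
    Measurable fun t => ∫ p in Set.Ioi 0, p ^ s / (p ^ 2 + 1 + c * t * p) :=
  (Measurable.stronglyMeasurable (by fun_prop :
    Measurable fun q : ℝ × ℝ => q.2 ^ s / (q.2 ^ 2 + 1 + c * q.1 * q.2))).integral_prod_right'
    |>.measurable

lemma abs_mul_integral_rpow_div_sq_add_one_add_mul_sub_le (hs0 : 0 ≤ s) (hs1 : s < 1)
    (hc : 0 ≤ c) (hc2 : c < 2) (ht : |t| ≤ 1) :
    |t * ((∫ p in Set.Ioi 0, p ^ s / (p ^ 2 + 1 + c * t * p)) -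
        ∫ p in Set.Ioi 0, p ^ s / (p ^ 2 + 1))| ≤
      c / (1 - c / 2) * ∫ p in Set.Ioi 0, p ^ (s + 1) / (p ^ 2 + 1) ^ 2 := by
  have hI : 0 ≤ ∫ p in Set.Ioi (0 : ℝ), p ^ (s + 1) / (p ^ 2 + 1) ^ 2 :=
    setIntegral_nonneg measurableSet_Ioi fun p (hp : 0 < p) => by positivity
  have hκ : 0 ≤ c / (1 - c / 2) := div_nonneg hc (by linarith)
  rw [abs_mul]
  calc |t| * |_| ≤ 1 * (c / (1 - c / 2) * |t| * _) :=
        mul_le_mul ht (abs_integral_rpow_div_sq_add_one_add_mul_sub_le hs0 hs1 hc hc2 ht)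
          (abs_nonneg _) zero_le_one
    _ = c / (1 - c / 2) * (∫ p in Set.Ioi 0, p ^ (s + 1) / (p ^ 2 + 1) ^ 2) * |t| := by ring
    _ ≤ _ := mul_le_of_le_one_right (mul_nonneg hκ hI) ht

end Kernel

lemma integral_mul_eq_integral_mul_sub_const {f : ℝ → ℝ} (a b : ℝ)
    (hf : IntervalIntegrable (fun t => t * f t) volume (-a) a) :
    ∫ t in (-a)..a, t * f t = ∫ t in (-a)..a, t * (f t - b) := by
  simp_rw [mul_sub]
  rw [intervalIntegral.integral_sub hf
      ((by fun_prop : Continuous fun t : ℝ => t * b).intervalIntegrable _ _),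
    intervalIntegral.integral_mul_const, integral_id]
  ring

lemma abs_le_one_of_mem_uIoc {t : ℝ} (ht : t ∈ Set.uIoc (-1 : ℝ) 1) : |t| ≤ 1 := by
  rw [Set.uIoc_of_le (by norm_num)] at ht
  exact abs_le.2 ⟨ht.1.le, ht.2⟩

lemma intervalIntegrable_mul_integral_rpow_div_sq_add_one_add_mul {s c : ℝ} (hs0 : 0 ≤ s)
    (hs1 : s < 1) (hc : 0 ≤ c) (hc2 : c < 2) :
    IntervalIntegrable (fun t => t * ∫ p in Set.Ioi 0, p ^ s / (p ^ 2 + 1 + c * t * p))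
      volume (-1) 1 := by
  set B := ∫ p in Set.Ioi (0 : ℝ), p ^ s / (p ^ 2 + 1)
  set I := ∫ p in Set.Ioi (0 : ℝ), p ^ (s + 1) / (p ^ 2 + 1) ^ 2
  refine (intervalIntegrable_const (c := c / (1 - c / 2) * I + |B|)).mono_fun'
    (measurable_id.mul (measurable_integral_rpow_div_sq_add_one_add_mul s c)).aestronglyMeasurable
    ?_
  filter_upwards [ae_restrict_mem measurableSet_uIoc] with t ht
  have ht' := abs_le_one_of_mem_uIoc ht
  calc ‖t * ∫ p in Set.Ioi 0, p ^ s / (p ^ 2 + 1 + c * t * p)‖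
      = |t * ((∫ p in Set.Ioi 0, p ^ s / (p ^ 2 + 1 + c * t * p)) - B) + t * B| := by
        rw [mul_sub, sub_add_cancel, norm_eq_abs]
    _ ≤ c / (1 - c / 2) * I + |B| := by
        refine (abs_add_le _ _).trans (add_le_add
          (abs_mul_integral_rpow_div_sq_add_one_add_mul_sub_le hs0 hs1 hc hc2 ht') ?_)
        rw [abs_mul]
        exact mul_le_of_le_one_left (abs_nonneg _) ht'

theorem stmt7 (m s : ℝ) (hm : 0 < m) (hs0 : 0 < s) (hs1 : s < 1) :
    |∫ t in (-1 : ℝ)..1,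
        t * ∫ p in Set.Ioi (0 : ℝ), p ^ s / (p ^ 2 + 1 + (2 / (m + 1)) * t * p)| ≤
      (4 / m) * ∫ p in Set.Ioi (0 : ℝ), p ^ (s + 1) / (p ^ 2 + 1) ^ 2 := by
  set c := 2 / (m + 1)
  have hc : 0 ≤ c := by positivity
  have hc2 : c < 2 := by
    rw [div_lt_iff₀ (by linarith)]
    linarith
  have hcκ : c / (1 - c / 2) = 2 / m := by
    rw [div_eq_div_iff (by linarith) hm.ne']
    simp only [c]
    field_simp
    ring
  rw [integral_mul_eq_integral_mul_sub_const 1 (∫ p in Set.Ioi (0 : ℝ), p ^ s / (p ^ 2 + 1))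
    (intervalIntegrable_mul_integral_rpow_div_sq_add_one_add_mul hs0.le hs1 hc hc2),
    ← norm_eq_abs]
  calc _ ≤ c / (1 - c / 2) * (∫ p in Set.Ioi (0 : ℝ), p ^ (s + 1) / (p ^ 2 + 1) ^ 2)
        * |1 - (-1 : ℝ)| :=
      norm_integral_le_of_norm_le_const fun t ht =>
        abs_mul_integral_rpow_div_sq_add_one_add_mul_sub_le hs0.le hs1 hc hc2
          (abs_le_one_of_mem_uIoc ht)
    _ = _ := by
      rw [hcκ, show |1 - (-1 : ℝ)| = 2 by norm_num]
      ring
end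

section
/- Let m > 0 and 0 < s < 1 satisfy the resonance equation π √(m(m+2))/(m+1) + ∫_{-1}^{1} t ∫_0^∞ p^s/(p^2+1+(2/(m+1))tp) dp dt = 0. Then for every p > 0, 2π² √(m(m+2))/(m+1) · p^{s−1} + 2π ∫_{-1}^{1} t ∫_0^∞ q^s/(q^2 + p^2 + (2/(m+1)) t p q) dq dt = 0. -/
open MeasureTheory intervalIntegral Real

open Set in
lemma setIntegral_Ioi_rpow_div_quadratic_eq_rpow_mul (s c : ℝ) {p : ℝ} (hp : 0 < p) :
    ∫ q in Ioi (0 : ℝ), q ^ s / (q ^ 2 + p ^ 2 + c * p * q)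
      = p ^ (s - 1) * ∫ x in Ioi (0 : ℝ), x ^ s / (x ^ 2 + 1 + c * x) := by
  have homogeneous : ∀ x ∈ Ioi (0 : ℝ),
      (p * x) ^ s / ((p * x) ^ 2 + p ^ 2 + c * p * (p * x))
        = p ^ (s - 2) * (x ^ s / (x ^ 2 + 1 + c * x)) := by
    intro x hx
    rw [mul_rpow hp.le (le_of_lt hx), rpow_sub hp, rpow_two, ← mul_div_mul_comm]
    ring_nf
  calc ∫ q in Ioi (0 : ℝ), q ^ s / (q ^ 2 + p ^ 2 + c * p * q)
      = p * ∫ x in Ioi (0 : ℝ), (p * x) ^ s / ((p * x) ^ 2 + p ^ 2 + c * p * (p * x)) := by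
        have h := integral_comp_mul_left_Ioi'
          (fun q : ℝ => q ^ s / (q ^ 2 + p ^ 2 + c * p * q)) 0 hp
        rw [mul_zero, smul_eq_mul] at h
        exact h.symm
    _ = p * ∫ x in Ioi (0 : ℝ), p ^ (s - 2) * (x ^ s / (x ^ 2 + 1 + c * x)) := by
        rw [setIntegral_congr_fun measurableSet_Ioi homogeneous]
    _ = p ^ (s - 1) * ∫ x in Ioi (0 : ℝ), x ^ s / (x ^ 2 + 1 + c * x) := by
        rw [MeasureTheory.integral_const_mul, ← mul_assoc, show s - 1 = 1 + (s - 2) by ring,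
          rpow_add hp, rpow_one]

theorem stmt9_general (m s : ℝ)
    (hres :
      Real.pi * Real.sqrt (m * (m + 2)) / (m + 1) +
        (∫ t in (-1 : ℝ)..1,
          t * ∫ p in Set.Ioi (0 : ℝ), p ^ s / (p ^ 2 + 1 + (2 / (m + 1)) * t * p)) = 0) :
    ∀ p : ℝ, 0 < p →
      2 * Real.pi ^ 2 * Real.sqrt (m * (m + 2)) / (m + 1) * p ^ (s - 1) +
        2 * Real.pi *
          (∫ t in (-1 : ℝ)..1,
            t * ∫ q in Set.Ioi (0 : ℝ),
              q ^ s / (q ^ 2 + p ^ 2 + (2 / (m + 1)) * t * p * q)) = 0 := by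
  intro p hp
  have scaled : (∫ t in (-1 : ℝ)..1,
      t * ∫ q in Set.Ioi (0 : ℝ), q ^ s / (q ^ 2 + p ^ 2 + (2 / (m + 1)) * t * p * q))
      = p ^ (s - 1) * ∫ t in (-1 : ℝ)..1,
          t * ∫ q in Set.Ioi (0 : ℝ), q ^ s / (q ^ 2 + 1 + (2 / (m + 1)) * t * q) := by
    rw [← intervalIntegral.integral_const_mul]
    refine integral_congr fun t _ => ?_
    simp only [setIntegral_Ioi_rpow_div_quadratic_eq_rpow_mul s (2 / (m + 1) * t) hp]
    ring
  rw [scaled]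
  linear_combination (2 * Real.pi * p ^ (s - 1)) * hres

theorem stmt9 (m s : ℝ) (hm : 0 < m) (hs0 : 0 < s) (hs1 : s < 1)
    (hres :
      Real.pi * Real.sqrt (m * (m + 2)) / (m + 1) +
        (∫ t in (-1 : ℝ)..1,
          t * ∫ p in Set.Ioi (0 : ℝ), p ^ s / (p ^ 2 + 1 + (2 / (m + 1)) * t * p)) = 0) :
    ∀ p : ℝ, 0 < p →
      2 * Real.pi ^ 2 * Real.sqrt (m * (m + 2)) / (m + 1) * p ^ (s - 1) +
        2 * Real.pi *
          (∫ t in (-1 : ℝ)..1,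
            t * ∫ q in Set.Ioi (0 : ℝ),
              q ^ s / (q ^ 2 + p ^ 2 + (2 / (m + 1)) * t * p * q)) = 0 :=
  stmt9_general m s hres
end

section
/- Let K be the integral operator on L²(ℝ³) with kernel K(k₁,k₂) = 1_{{|k₂| ≥ a|k₁|}} · |k₁|^{1/2}|k₂|^{1/2}/(|k₁|² + |k₂|² + (2/(m+1)) k₁·k₂)², where m > 0 and a > 1. Then the operator norm of K satisfies ‖K‖ ≤ √(c₁(a) c₂(a)), where c₁(a) = 4π ∫_a^∞ q^{5/2}/(1+q² − (2/(m+1))q)² dq and c₂(a) = 4π ∫_0^{1/a} q^{5/2}/(1+q² − (2/(m+1))q)² dq. -/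
/-!
Schur test: writing `f K g = (f √K) (√K g)` and applying Cauchy–Schwarz on the product space gives
`∫∫ |f| K |g| ≤ √(C₁ C₂) ‖f‖₂ ‖g‖₂` as soon as every row integral of `K` is at most `C₁` and
every column integral at most `C₂`.

For `c = 2 / (m + 1) ∈ (0, 2)` the bound `k₁ · k₂ ≥ -|k₁| |k₂|` dominates `K` by a kernel of
`r₁ = |k₁|`, `r₂ = |k₂|` alone, with positive denominator `r₁² + r₂² - c r₁ r₂`. This radial
kernel is homogeneous of degree `-3`, so in polar coordinates (`dk = 4π r² dr`) the substitution
`r₂ = q r₁` turns every row integral into `4π ∫_a^∞ q^{5/2} / (1 + q² - c q)² dq`, and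
`r₁ = q r₂` turns every column integral into `4π` times the integral of the same integrand over
`(0, 1/a]`. The first integral converges because its integrand is `O(q^{-3/2})`.
-/

open MeasureTheory intervalIntegral Real
open scoped RealInnerProductSpace
open Set Metric
open scoped ENNReal

section Schur

variable {α β : Type*} [MeasurableSpace α] [MeasurableSpace β] {μ : Measure α} {ν : Measure β}

theorem integral_le_toReal_lintegral_ofReal (f : α → ℝ) :
    ∫ a, f a ∂μ ≤ (∫⁻ a, ENNReal.ofReal (f a) ∂μ).toReal := by
  by_cases hf : Integrable f μ
  · rw [integral_eq_lintegral_pos_part_sub_lintegral_neg_part hf]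
    exact sub_le_self _ ENNReal.toReal_nonneg
  · rw [integral_undef hf]
    exact ENNReal.toReal_nonneg

theorem ofReal_integral_le_lintegral_ofReal (f : α → ℝ) :
    ENNReal.ofReal (∫ a, f a ∂μ) ≤ ∫⁻ a, ENNReal.ofReal (f a) ∂μ :=
  (ENNReal.ofReal_le_ofReal (integral_le_toReal_lintegral_ofReal f)).trans ENNReal.ofReal_toReal_le

theorem integral_integral_le_of_lintegral_lintegral_le {F : α → β → ℝ} {B : ℝ} (hB : 0 ≤ B)
    (h : ∫⁻ x, ∫⁻ y, ENNReal.ofReal (F x y) ∂ν ∂μ ≤ ENNReal.ofReal B) :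
    ∫ x, ∫ y, F x y ∂ν ∂μ ≤ B := by
  calc ∫ x, ∫ y, F x y ∂ν ∂μ ≤ (∫⁻ x, ENNReal.ofReal (∫ y, F x y ∂ν) ∂μ).toReal :=
        integral_le_toReal_lintegral_ofReal _
    _ ≤ (ENNReal.ofReal B).toReal :=
        ENNReal.toReal_mono ENNReal.ofReal_ne_top <|
          (lintegral_mono fun x => ofReal_integral_le_lintegral_ofReal _).trans h
    _ = B := ENNReal.toReal_ofReal hB

theorem lintegral_prod_mul_le_of_lintegral_le [SFinite ν] {K : α → β → ℝ≥0∞}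
    (hK : Measurable (Function.uncurry K)) {f : α → ℝ≥0∞} (hf : Measurable f) {C : ℝ≥0∞}
    (hrow : ∀ x, ∫⁻ y, K x y ∂ν ≤ C) :
    ∫⁻ p, f p.1 * K p.1 p.2 ∂μ.prod ν ≤ C * ∫⁻ x, f x ∂μ := by
  rw [lintegral_prod _ (by fun_prop)]
  calc ∫⁻ x, ∫⁻ y, f x * K x y ∂ν ∂μ
        = ∫⁻ x, f x * ∫⁻ y, K x y ∂ν ∂μ :=
        lintegral_congr fun x => lintegral_const_mul _ hK.of_uncurry_left
    _ ≤ ∫⁻ x, f x * C ∂μ := by gcongr with x; exact hrow x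
    _ = C * ∫⁻ x, f x ∂μ := by rw [lintegral_mul_const _ hf, mul_comm]

theorem lintegral_lintegral_mul_kernel_mul_le [SFinite μ] [SFinite ν] {K : α → β → ℝ≥0∞}
    (hK : Measurable (Function.uncurry K)) {f : α → ℝ≥0∞} {g : β → ℝ≥0∞} (hf : Measurable f)
    (hg : Measurable g) {C₁ C₂ : ℝ≥0∞} (hrow : ∀ x, ∫⁻ y, K x y ∂ν ≤ C₁)
    (hcol : ∀ y, ∫⁻ x, K x y ∂μ ≤ C₂) :
    ∫⁻ x, ∫⁻ y, f x * K x y * g y ∂ν ∂μ ≤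
      (C₁ * ∫⁻ x, f x ^ 2 ∂μ) ^ (1 / 2 : ℝ) * (C₂ * ∫⁻ y, g y ^ 2 ∂ν) ^ (1 / 2 : ℝ) := by
  set φ : α × β → ℝ≥0∞ := fun p => f p.1 * K p.1 p.2 ^ (1 / 2 : ℝ)
  set ψ : α × β → ℝ≥0∞ := fun p => g p.2 * K p.1 p.2 ^ (1 / 2 : ℝ)
  have hsplit : ∀ x y, f x * K x y * g y = (φ * ψ) (x, y) := fun x y => by
    have : K x y ^ (1 / 2 : ℝ) * K x y ^ (1 / 2 : ℝ) = K x y := by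
      rw [← ENNReal.rpow_add_of_nonneg _ _ (by norm_num) (by norm_num)]; norm_num
    simp only [φ, ψ, Pi.mul_apply]
    conv_lhs => rw [← this]
    ring
  have hsq : ∀ (u v : ℝ≥0∞), (u * v ^ (1 / 2 : ℝ)) ^ (2 : ℝ) = u ^ 2 * v := fun u v => by
    rw [ENNReal.mul_rpow_of_nonneg _ _ zero_le_two, ← ENNReal.rpow_mul, ENNReal.rpow_two]
    norm_num
  have hφ : ∫⁻ p, φ p ^ (2 : ℝ) ∂μ.prod ν ≤ C₁ * ∫⁻ x, f x ^ 2 ∂μ := by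
    simp only [φ, hsq]
    exact lintegral_prod_mul_le_of_lintegral_le hK (hf.pow_const 2) hrow
  have hψ : ∫⁻ p, ψ p ^ (2 : ℝ) ∂μ.prod ν ≤ C₂ * ∫⁻ y, g y ^ 2 ∂ν := by
    simp only [ψ, hsq]
    rw [← lintegral_prod_swap]
    exact lintegral_prod_mul_le_of_lintegral_le (K := fun y x => K x y) (hK.comp measurable_swap)
      (hg.pow_const 2) hcol
  calc ∫⁻ x, ∫⁻ y, f x * K x y * g y ∂ν ∂μ = ∫⁻ p, (φ * ψ) p ∂μ.prod ν := by
        simp only [hsplit]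
        exact (lintegral_prod _ (by fun_prop)).symm
    _ ≤ (∫⁻ p, φ p ^ (2 : ℝ) ∂μ.prod ν) ^ (1 / 2 : ℝ) *
          (∫⁻ p, ψ p ^ (2 : ℝ) ∂μ.prod ν) ^ (1 / 2 : ℝ) :=
        ENNReal.lintegral_mul_le_Lp_mul_Lq _ Real.HolderConjugate.two_two (by fun_prop)
          (by fun_prop)
    _ ≤ _ := by gcongr

theorem lintegral_ofReal_abs_sq {h : α → ℝ} (hh : Integrable (fun z => h z ^ 2) μ) :
    ∫⁻ z, ENNReal.ofReal |h z| ^ 2 ∂μ = ENNReal.ofReal (∫ z, h z ^ 2 ∂μ) := by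
  simp_rw [← ENNReal.ofReal_pow (abs_nonneg _), sq_abs]
  exact (ofReal_integral_eq_lintegral_ofReal hh (.of_forall fun _ => sq_nonneg _)).symm

theorem integral_integral_abs_mul_kernel_mul_abs_le [SFinite μ] [SFinite ν] {K : α → β → ℝ}
    (hK : Measurable (Function.uncurry K)) {f : α → ℝ} {g : β → ℝ} (hf : Measurable f)
    (hg : Measurable g) (hf₂ : Integrable (fun x => f x ^ 2) μ)
    (hg₂ : Integrable (fun y => g y ^ 2) ν) {C₁ C₂ : ℝ} (hC₁ : 0 ≤ C₁) (hC₂ : 0 ≤ C₂)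
    (hrow : ∀ x, ∫⁻ y, ENNReal.ofReal (K x y) ∂ν ≤ ENNReal.ofReal C₁)
    (hcol : ∀ y, ∫⁻ x, ENNReal.ofReal (K x y) ∂μ ≤ ENNReal.ofReal C₂) :
    ∫ x, ∫ y, |f x| * K x y * |g y| ∂ν ∂μ ≤
      √(C₁ * C₂) * (√(∫ x, f x ^ 2 ∂μ) * √(∫ y, g y ^ 2 ∂ν)) := by
  have hsqrt : ∀ {C I : ℝ}, 0 ≤ C → 0 ≤ I →
      (ENNReal.ofReal C * ENNReal.ofReal I) ^ (1 / 2 : ℝ) = ENNReal.ofReal (√C * √I) :=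
    fun hC hI => by
      rw [← ENNReal.ofReal_mul hC, ENNReal.ofReal_rpow_of_nonneg (by positivity) (by norm_num),
        ← Real.sqrt_eq_rpow, Real.sqrt_mul hC]
  refine integral_integral_le_of_lintegral_lintegral_le (by positivity) ?_
  calc ∫⁻ x, ∫⁻ y, ENNReal.ofReal (|f x| * K x y * |g y|) ∂ν ∂μ
        = ∫⁻ x, ∫⁻ y,
            ENNReal.ofReal |f x| * ENNReal.ofReal (K x y) * ENNReal.ofReal |g y| ∂ν ∂μ := by
        simp only [ENNReal.ofReal_mul' (abs_nonneg _), ENNReal.ofReal_mul (abs_nonneg _)]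
    _ ≤ (ENNReal.ofReal C₁ * ∫⁻ x, ENNReal.ofReal |f x| ^ 2 ∂μ) ^ (1 / 2 : ℝ) *
          (ENNReal.ofReal C₂ * ∫⁻ y, ENNReal.ofReal |g y| ^ 2 ∂ν) ^ (1 / 2 : ℝ) :=
        lintegral_lintegral_mul_kernel_mul_le hK.ennreal_ofReal (by fun_prop) (by fun_prop)
          hrow hcol
    _ = ENNReal.ofReal (√(C₁ * C₂) * (√(∫ x, f x ^ 2 ∂μ) * √(∫ y, g y ^ 2 ∂ν))) := by
        rw [lintegral_ofReal_abs_sq hf₂, lintegral_ofReal_abs_sq hg₂,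
          hsqrt hC₁ (integral_nonneg fun _ => sq_nonneg _),
          hsqrt hC₂ (integral_nonneg fun _ => sq_nonneg _), ← ENNReal.ofReal_mul (by positivity),
          Real.sqrt_mul hC₁]
        ring_nf

end Schur

theorem lintegral_fun_norm_addHaar {E : Type*} [NormedAddCommGroup E] [NormedSpace ℝ E]
    [MeasurableSpace E] [BorelSpace E] [Nontrivial E] [FiniteDimensional ℝ E]
    (μ : Measure E) [μ.IsAddHaarMeasure] {f : ℝ → ℝ≥0∞} (hf : Measurable f) :
    ∫⁻ x, f ‖x‖ ∂μ = Module.finrank ℝ E * μ (ball 0 1) *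
      ∫⁻ r in Ioi 0, ENNReal.ofReal (r ^ (Module.finrank ℝ E - 1)) * f r := by
  calc ∫⁻ x, f ‖x‖ ∂μ = ∫⁻ x : ({0}ᶜ : Set E), f ‖x.1‖ ∂μ.comap (↑) := by
        rw [lintegral_subtype_comap (measurableSet_singleton _).compl fun x => f ‖x‖,
          restrict_compl_singleton]
    _ = ∫⁻ x : sphere (0 : E) 1 × Ioi (0 : ℝ), f x.2
          ∂μ.toSphere.prod (.volumeIoiPow (Module.finrank ℝ E - 1)) := by
        simpa using μ.measurePreserving_homeomorphUnitSphereProd.lintegral_comp_emb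
          (Homeomorph.measurableEmbedding _) (f ∘ Subtype.val ∘ Prod.snd)
    _ = μ.toSphere univ * ∫⁻ r : Ioi (0 : ℝ), f r ∂.volumeIoiPow (Module.finrank ℝ E - 1) := by
        rw [lintegral_prod _ (by fun_prop)]
        simp [lintegral_const, mul_comm]
    _ = _ := by
        rw [Measure.toSphere_apply_univ, Measure.volumeIoiPow,
          lintegral_withDensity_eq_lintegral_mul _ (by fun_prop) (by fun_prop),
          ← lintegral_subtype_comap measurableSet_Ioi]
        simp only [Pi.mul_apply, mul_assoc]

theorem lintegral_fun_norm_euclideanSpace_fin_three {f : ℝ → ℝ≥0∞} (hf : Measurable f) :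
    ∫⁻ x : EuclideanSpace ℝ (Fin 3), f ‖x‖ =
      ENNReal.ofReal (4 * π) * ∫⁻ r in Ioi 0, ENNReal.ofReal (r ^ 2) * f r := by
  rw [lintegral_fun_norm_addHaar volume hf, EuclideanSpace.volume_ball_fin_three]
  simp only [finrank_euclideanSpace_fin, ENNReal.ofReal_one, one_pow, one_mul]
  congr 1
  rw [show ((3 : ℕ) : ℝ≥0∞) = ENNReal.ofReal 3 by simp, ← ENNReal.ofReal_mul (by norm_num)]
  ring_nf

theorem lintegral_ofReal_fun_norm_fin_three_le {F : ℝ → ℝ} (hF : Measurable F) {B : ℝ}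
    (hB : ∫⁻ r in Ioi 0, ENNReal.ofReal (r ^ 2 * F r) ≤ ENNReal.ofReal B) :
    ∫⁻ x : EuclideanSpace ℝ (Fin 3), ENNReal.ofReal (F ‖x‖) ≤ ENNReal.ofReal (4 * π * B) := by
  rw [lintegral_fun_norm_euclideanSpace_fin_three hF.ennreal_ofReal,
    ENNReal.ofReal_mul (p := 4 * π) (by positivity)]
  simp_rw [← ENNReal.ofReal_mul (sq_nonneg _)]
  exact mul_le_mul_right hB _

theorem setLIntegral_Ioi_zero_comp_mul_left (f : ℝ → ℝ≥0∞) {s : ℝ} (hs : 0 < s) :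
    ∫⁻ r in Ioi 0, f (s * r) = ENNReal.ofReal s⁻¹ * ∫⁻ r in Ioi 0, f r := by
  have hemb : MeasurableEmbedding (s * ·) := measurableEmbedding_mulLeft₀ hs.ne'
  calc ∫⁻ r in Ioi 0, f (s * r) = ∫⁻ r in Ioi 0, f r ∂volume.map (s * ·) := by
        rw [hemb.restrict_map, hemb.lintegral_map, preimage_const_mul_Ioi₀ 0 hs, zero_div]
    _ = ENNReal.ofReal s⁻¹ * ∫⁻ r in Ioi 0, f r := by
        rw [Real.map_volume_mul_left hs.ne', Measure.restrict_smul, lintegral_smul_measure,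
          abs_of_pos (inv_pos.mpr hs), smul_eq_mul]

theorem setLIntegral_Ioi_zero_ofReal_sq_mul_eq_of_scaling {F G : ℝ → ℝ} {s : ℝ} (hs : 0 < s)
    (hFG : ∀ q, F (s * q) = (s ^ 3)⁻¹ * G q) :
    ∫⁻ r in Ioi 0, ENNReal.ofReal (r ^ 2 * F r) = ∫⁻ q in Ioi 0, ENNReal.ofReal (q ^ 2 * G q) := by
  have hscale : ∀ q, (s * q) ^ 2 * F (s * q) = s⁻¹ * (q ^ 2 * G q) := fun q => by
    rw [hFG]; field_simp
  have h := setLIntegral_Ioi_zero_comp_mul_left (fun r => ENNReal.ofReal (r ^ 2 * F r)) hs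
  simp only [hscale, ENNReal.ofReal_mul (inv_nonneg.mpr hs.le)] at h
  rw [lintegral_const_mul' _ _ ENNReal.ofReal_ne_top] at h
  exact ((ENNReal.mul_right_inj (by simpa using hs) ENNReal.ofReal_ne_top).mp h).symm

theorem sq_mul_sqrt {q : ℝ} (hq : 0 ≤ q) : q ^ 2 * √q = q ^ (5 / 2 : ℝ) := by
  rw [sqrt_eq_rpow, ← rpow_natCast, ← rpow_add' hq (by norm_num)]
  norm_num

noncomputable def couplingKernel {E : Type*} [NormedAddCommGroup E] [InnerProductSpace ℝ E]
    (c a : ℝ) (x y : E) : ℝ :=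
  (if a * ‖x‖ ≤ ‖y‖ then 1 else 0) * (‖x‖ ^ (1 / 2 : ℝ) * ‖y‖ ^ (1 / 2 : ℝ)) /
    (‖x‖ ^ 2 + ‖y‖ ^ 2 + c * ⟪x, y⟫) ^ 2

noncomputable def radialKernel (c a r₁ r₂ : ℝ) : ℝ :=
  (if a * r₁ ≤ r₂ then 1 else 0) * (√r₁ * √r₂) / (r₁ ^ 2 + r₂ ^ 2 - c * (r₁ * r₂)) ^ 2

noncomputable def kernelWeight (c q : ℝ) : ℝ := q ^ (5 / 2 : ℝ) / (1 + q ^ 2 - c * q) ^ 2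

section Kernel

variable {c a : ℝ}

theorem one_sub_half_mul_sq_add_sq_le (hc : 0 ≤ c) (x y : ℝ) :
    (1 - c / 2) * (x ^ 2 + y ^ 2) ≤ x ^ 2 + y ^ 2 - c * (x * y) := by
  nlinarith [sq_nonneg (x - y)]

theorem one_add_sq_sub_mul_pos (hc₀ : 0 ≤ c) (hc₂ : c < 2) (q : ℝ) : 0 < 1 + q ^ 2 - c * q := by
  nlinarith [one_sub_half_mul_sq_add_sq_le hc₀ 1 q]

theorem measurable_couplingKernel {E : Type*} [NormedAddCommGroup E] [InnerProductSpace ℝ E]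
    [MeasurableSpace E] [BorelSpace E] [SecondCountableTopology E] :
    Measurable (Function.uncurry (couplingKernel (E := E) c a)) :=
  ((Measurable.ite (measurableSet_le (by fun_prop) (by fun_prop)) measurable_const
    measurable_const).mul (by fun_prop)).div (by fun_prop)

theorem measurable_radialKernel : Measurable (Function.uncurry (radialKernel c a)) :=
  ((Measurable.ite (measurableSet_le (by fun_prop) (by fun_prop)) measurable_const
    measurable_const).mul (by fun_prop)).div (by fun_prop)

theorem couplingKernel_le_radialKernel {E : Type*} [NormedAddCommGroup E] [InnerProductSpace ℝ E]
    (hc₀ : 0 ≤ c) (hc₂ : c < 2) (x y : E) :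
    couplingKernel c a x y ≤ radialKernel c a ‖x‖ ‖y‖ := by
  rcases (norm_nonneg x).eq_or_lt with hx | hx
  · simp [couplingKernel, radialKernel, ← hx]
  have hD : 0 < ‖x‖ ^ 2 + ‖y‖ ^ 2 - c * (‖x‖ * ‖y‖) := by
    nlinarith [one_sub_half_mul_sq_add_sq_le hc₀ ‖x‖ ‖y‖, pow_pos hx 2, sq_nonneg ‖y‖]
  have hinner : -(‖x‖ * ‖y‖) ≤ ⟪x, y⟫ := neg_le_of_abs_le (abs_real_inner_le_norm x y)
  unfold couplingKernel radialKernel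
  rw [sqrt_eq_rpow, sqrt_eq_rpow]
  gcongr
  linarith [mul_le_mul_of_nonneg_left hinner hc₀]

theorem radialKernel_mul_mul {t r₁ r₂ : ℝ} (ht : 0 < t) :
    radialKernel c a (t * r₁) (t * r₂) = (t ^ 3)⁻¹ * radialKernel c a r₁ r₂ := by
  have hcond : a * (t * r₁) ≤ t * r₂ ↔ a * r₁ ≤ r₂ := by
    rw [mul_left_comm]; exact mul_le_mul_iff_right₀ ht
  have hsqrt : √(t * r₁) * √(t * r₂) = t * (√r₁ * √r₂) := by
    rw [sqrt_mul ht.le, sqrt_mul ht.le, mul_mul_mul_comm, mul_self_sqrt ht.le]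
  have hden : (t * r₁) ^ 2 + (t * r₂) ^ 2 - c * (t * r₁ * (t * r₂)) =
      t ^ 2 * (r₁ ^ 2 + r₂ ^ 2 - c * (r₁ * r₂)) := by ring
  unfold radialKernel
  rw [if_congr hcond rfl rfl, hsqrt, hden, mul_pow, mul_left_comm, ← pow_mul, mul_div_mul_comm]
  congr 1
  field_simp

theorem radialKernel_zero_left (r : ℝ) : radialKernel c a 0 r = 0 := by simp [radialKernel]

theorem radialKernel_zero_right (r : ℝ) : radialKernel c a r 0 = 0 := by simp [radialKernel]

theorem kernelWeight_nonneg {q : ℝ} (hq : 0 ≤ q) : 0 ≤ kernelWeight c q :=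
  div_nonneg (rpow_nonneg hq _) (sq_nonneg _)

theorem continuous_kernelWeight (hc₀ : 0 ≤ c) (hc₂ : c < 2) : Continuous (kernelWeight c) :=
  (continuous_id.rpow_const fun _ => Or.inr (by norm_num)).div (by fun_prop)
    fun q => pow_ne_zero 2 (one_add_sq_sub_mul_pos hc₀ hc₂ q).ne'

theorem kernelWeight_le (hc₀ : 0 ≤ c) (hc₂ : c < 2) {q : ℝ} (hq : 0 < q) :
    kernelWeight c q ≤ ((1 - c / 2) ^ 2)⁻¹ * q ^ (-3 / 2 : ℝ) := by
  have hden : (1 - c / 2) * q ^ 2 ≤ 1 + q ^ 2 - c * q := by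
    nlinarith [one_sub_half_mul_sq_add_sq_le hc₀ 1 q]
  have hpow : q ^ (-3 / 2 : ℝ) = q ^ (5 / 2 : ℝ) / q ^ 4 := by
    rw [← rpow_natCast, ← rpow_sub hq]
    norm_num
  have hε : 0 < 1 - c / 2 := by linarith
  calc kernelWeight c q ≤ q ^ (5 / 2 : ℝ) / ((1 - c / 2) * q ^ 2) ^ 2 := by
        unfold kernelWeight
        gcongr
    _ = ((1 - c / 2) ^ 2)⁻¹ * q ^ (-3 / 2 : ℝ) := by
        rw [hpow]
        field_simp

theorem integrableOn_Ioi_kernelWeight (hc₀ : 0 ≤ c) (hc₂ : c < 2) (ha : 0 < a) :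
    IntegrableOn (kernelWeight c) (Ioi a) := by
  have hdom := (integrableOn_Ioi_rpow_of_lt (show (-3 / 2 : ℝ) < -1 by norm_num) ha).const_mul
    ((1 - c / 2) ^ 2)⁻¹
  refine hdom.mono' (continuous_kernelWeight hc₀ hc₂).aestronglyMeasurable ?_
  filter_upwards [ae_restrict_mem measurableSet_Ioi] with q hq
  rw [norm_of_nonneg (kernelWeight_nonneg (ha.trans hq).le)]
  exact kernelWeight_le hc₀ hc₂ (ha.trans hq)

theorem sq_mul_radialKernel_one_left {q : ℝ} (hq : 0 ≤ q) :
    q ^ 2 * radialKernel c a 1 q = (Ici a).indicator (kernelWeight c) q := by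
  by_cases h : q ∈ Ici a
  · rw [indicator_of_mem h, radialKernel, if_pos (by rwa [mul_one]), kernelWeight,
      ← sq_mul_sqrt hq]
    simp only [sqrt_one, one_pow, one_mul]
    ring
  · rw [indicator_of_notMem h, radialKernel, if_neg (by rwa [mul_one])]
    simp

theorem sq_mul_radialKernel_one_right (ha : 0 < a) {q : ℝ} (hq : 0 ≤ q) :
    q ^ 2 * radialKernel c a q 1 = (Iic (1 / a)).indicator (kernelWeight c) q := by
  have hcond : a * q ≤ 1 ↔ q ∈ Iic (1 / a) := (le_div_iff₀' ha).symm
  by_cases h : q ∈ Iic (1 / a)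
  · rw [indicator_of_mem h, radialKernel, if_pos (hcond.mpr h), kernelWeight, ← sq_mul_sqrt hq]
    simp only [sqrt_one, one_pow, mul_one]
    ring
  · rw [indicator_of_notMem h, radialKernel, if_neg (mt hcond.mp h)]
    simp

theorem setLIntegral_sq_mul_radialKernel_one_left (hc₀ : 0 ≤ c) (hc₂ : c < 2) (ha : 0 < a) :
    ∫⁻ q in Ioi 0, ENNReal.ofReal (q ^ 2 * radialKernel c a 1 q) =
      ENNReal.ofReal (∫ q in Ioi a, kernelWeight c q) := by
  calc ∫⁻ q in Ioi 0, ENNReal.ofReal (q ^ 2 * radialKernel c a 1 q)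
        = ∫⁻ q in Ioi 0, (Ici a).indicator (fun q => ENNReal.ofReal (kernelWeight c q)) q :=
        setLIntegral_congr_fun measurableSet_Ioi fun q hq => by
          rw [sq_mul_radialKernel_one_left (le_of_lt hq)]
          exact (congrFun (indicator_comp_of_zero ENNReal.ofReal_zero) q).symm
    _ = ∫⁻ q in Ioi a, ENNReal.ofReal (kernelWeight c q) := by
        rw [lintegral_indicator measurableSet_Ici, Measure.restrict_restrict measurableSet_Ici,
          inter_eq_left.mpr (Ici_subset_Ioi.mpr ha), restrict_Ioi_eq_restrict_Ici]
    _ = ENNReal.ofReal (∫ q in Ioi a, kernelWeight c q) :=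
        (ofReal_integral_eq_lintegral_ofReal (integrableOn_Ioi_kernelWeight hc₀ hc₂ ha)
          (ae_restrict_of_forall_mem measurableSet_Ioi fun q hq =>
            kernelWeight_nonneg (ha.trans hq).le)).symm

theorem setLIntegral_sq_mul_radialKernel_one_right (hc₀ : 0 ≤ c) (hc₂ : c < 2) (ha : 0 < a) :
    ∫⁻ q in Ioi 0, ENNReal.ofReal (q ^ 2 * radialKernel c a q 1) =
      ENNReal.ofReal (∫ q in (0 : ℝ)..(1 / a), kernelWeight c q) := by
  calc ∫⁻ q in Ioi 0, ENNReal.ofReal (q ^ 2 * radialKernel c a q 1)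
        = ∫⁻ q in Ioi 0, (Iic (1 / a)).indicator (fun q => ENNReal.ofReal (kernelWeight c q)) q :=
        setLIntegral_congr_fun measurableSet_Ioi fun q hq => by
          rw [sq_mul_radialKernel_one_right ha (le_of_lt hq)]
          exact (congrFun (indicator_comp_of_zero ENNReal.ofReal_zero) q).symm
    _ = ∫⁻ q in Ioc 0 (1 / a), ENNReal.ofReal (kernelWeight c q) := by
        rw [lintegral_indicator measurableSet_Iic, Measure.restrict_restrict measurableSet_Iic,
          Iic_inter_Ioi]
    _ = ENNReal.ofReal (∫ q in (0 : ℝ)..(1 / a), kernelWeight c q) := by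
        rw [integral_of_le (by positivity)]
        exact (ofReal_integral_eq_lintegral_ofReal
          (continuous_kernelWeight hc₀ hc₂).integrableOn_Ioc
          (ae_restrict_of_forall_mem measurableSet_Ioc fun q hq =>
            kernelWeight_nonneg hq.1.le)).symm

theorem setLIntegral_sq_mul_radialKernel_le_row (hc₀ : 0 ≤ c) (hc₂ : c < 2) (ha : 0 < a)
    {r₁ : ℝ} (hr₁ : 0 ≤ r₁) :
    ∫⁻ r in Ioi 0, ENNReal.ofReal (r ^ 2 * radialKernel c a r₁ r) ≤
      ENNReal.ofReal (∫ q in Ioi a, kernelWeight c q) := by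
  rw [← setLIntegral_sq_mul_radialKernel_one_left hc₀ hc₂ ha]
  rcases hr₁.eq_or_lt with rfl | hr₁
  · simp [radialKernel_zero_left]
  · refine (setLIntegral_Ioi_zero_ofReal_sq_mul_eq_of_scaling hr₁ fun q => ?_).le
    simpa using radialKernel_mul_mul (c := c) (a := a) (r₁ := 1) (r₂ := q) hr₁

theorem setLIntegral_sq_mul_radialKernel_le_col (hc₀ : 0 ≤ c) (hc₂ : c < 2) (ha : 0 < a)
    {r₂ : ℝ} (hr₂ : 0 ≤ r₂) :
    ∫⁻ r in Ioi 0, ENNReal.ofReal (r ^ 2 * radialKernel c a r r₂) ≤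
      ENNReal.ofReal (∫ q in (0 : ℝ)..(1 / a), kernelWeight c q) := by
  rw [← setLIntegral_sq_mul_radialKernel_one_right hc₀ hc₂ ha]
  rcases hr₂.eq_or_lt with rfl | hr₂
  · simp [radialKernel_zero_right]
  · refine (setLIntegral_Ioi_zero_ofReal_sq_mul_eq_of_scaling hr₂ fun q => ?_).le
    simpa using radialKernel_mul_mul (c := c) (a := a) (r₁ := q) (r₂ := 1) hr₂

theorem lintegral_couplingKernel_le_row (hc₀ : 0 ≤ c) (hc₂ : c < 2) (ha : 0 < a)
    (x : EuclideanSpace ℝ (Fin 3)) :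
    ∫⁻ y, ENNReal.ofReal (couplingKernel c a x y) ≤
      ENNReal.ofReal (4 * π * ∫ q in Ioi a, kernelWeight c q) :=
  (lintegral_mono fun y =>
      ENNReal.ofReal_le_ofReal (couplingKernel_le_radialKernel hc₀ hc₂ x y)).trans
    (lintegral_ofReal_fun_norm_fin_three_le measurable_radialKernel.of_uncurry_left
      (setLIntegral_sq_mul_radialKernel_le_row hc₀ hc₂ ha (norm_nonneg x)))

theorem lintegral_couplingKernel_le_col (hc₀ : 0 ≤ c) (hc₂ : c < 2) (ha : 0 < a)
    (y : EuclideanSpace ℝ (Fin 3)) :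
    ∫⁻ x, ENNReal.ofReal (couplingKernel c a x y) ≤
      ENNReal.ofReal (4 * π * ∫ q in (0 : ℝ)..(1 / a), kernelWeight c q) :=
  (lintegral_mono fun x =>
      ENNReal.ofReal_le_ofReal (couplingKernel_le_radialKernel hc₀ hc₂ x y)).trans
    (lintegral_ofReal_fun_norm_fin_three_le measurable_radialKernel.of_uncurry_right
      (setLIntegral_sq_mul_radialKernel_le_col hc₀ hc₂ ha (norm_nonneg y)))

end Kernel

theorem stmt13 (m a : ℝ) (hm : 0 < m) (ha : 1 < a)
    (f g : EuclideanSpace ℝ (Fin 3) → ℝ) (hfmeas : Measurable f) (hgmeas : Measurable g)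
    (hf : Integrable (fun x => (f x) ^ 2)) (hg : Integrable (fun x => (g x) ^ 2)) :
    (∫ k₁ : EuclideanSpace ℝ (Fin 3), ∫ k₂ : EuclideanSpace ℝ (Fin 3),
        |f k₁| *
          ((if a * ‖k₁‖ ≤ ‖k₂‖ then (1 : ℝ) else 0) *
            (‖k₁‖ ^ ((1 : ℝ) / 2) * ‖k₂‖ ^ ((1 : ℝ) / 2)) /
              (‖k₁‖ ^ 2 + ‖k₂‖ ^ 2 + (2 / (m + 1)) * ⟪k₁, k₂⟫) ^ 2) *
          |g k₂|) ≤
      Real.sqrt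
          ((4 * Real.pi *
              ∫ q in Set.Ioi a, q ^ ((5 : ℝ) / 2) / (1 + q ^ 2 - (2 / (m + 1)) * q) ^ 2) *
            (4 * Real.pi *
              ∫ q in (0 : ℝ)..(1 / a),
                q ^ ((5 : ℝ) / 2) / (1 + q ^ 2 - (2 / (m + 1)) * q) ^ 2)) *
        (Real.sqrt (∫ x, (f x) ^ 2) * Real.sqrt (∫ x, (g x) ^ 2)) := by
  have hc₀ : 0 ≤ 2 / (m + 1) := by positivity
  have hc₂ : 2 / (m + 1) < 2 := by rw [div_lt_iff₀ (by linarith)]; linarith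
  have ha₀ : 0 < a := by linarith
  have hC₁ : 0 ≤ 4 * π * ∫ q in Ioi a, kernelWeight (2 / (m + 1)) q :=
    mul_nonneg (by positivity) (setIntegral_nonneg measurableSet_Ioi fun q hq =>
      kernelWeight_nonneg (ha₀.trans hq).le)
  have hC₂ : 0 ≤ 4 * π * ∫ q in (0 : ℝ)..(1 / a), kernelWeight (2 / (m + 1)) q :=
    mul_nonneg (by positivity) (intervalIntegral.integral_nonneg (by positivity) fun q hq =>
      kernelWeight_nonneg hq.1)
  exact integral_integral_abs_mul_kernel_mul_abs_le measurable_couplingKernel hfmeas hgmeas hf hg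
    hC₁ hC₂ (lintegral_couplingKernel_le_row hc₀ hc₂ ha₀)
    (lintegral_couplingKernel_le_col hc₀ hc₂ ha₀)
end

section
/- Let m > 0 and λ > 0. For η with ‖η‖²_{H^{−1/2}_λ} := ∫_{ℝ³} |η̂(k)|²/√(k²+λ) dk < ∞, define (Ĝ_λ η)(k₁,k₂) = (η̂(k₁) − η̂(k₂))/(k₁² + k₂² + (2/(m+1)) k₁·k₂ + λ). Then there exist constants 0 < c₁ ≤ c₂ < ∞, independent of λ, such that c₁ ‖η‖²_{H^{−1/2}_λ} ≤ ‖G_λ η‖²_{L²(ℝ⁶)} ≤ c₂ ‖η‖²_{H^{−1/2}_λ}. -/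
/-!
Write `S = ‖k₁‖² + ‖k₂‖² + λ`, `D` for the denominator of `Ĝ_λ η` and `⟨k⟩ = √(‖k‖² + λ)`.
Cauchy–Schwarz gives `(m / (m + 1)) S ≤ D ≤ 2 S`, so `D⁻²` may be replaced by `S⁻²` up to
constants. Scaling `k₂ = ⟨k₁⟩ u` in `ℝ³` turns `∫ φ(‖k₂‖ / ⟨k₁⟩) S⁻² dk₂` into `c_φ / ⟨k₁⟩`,
with `c_φ = ∫ φ(‖u‖) (‖u‖² + 1)⁻² du` independent of `λ`; this is where the weight
`⟨k⟩⁻¹` of `H^{-1/2}_λ` comes from.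

The upper bound follows from `|η(k₁) - η(k₂)|² ≤ 2 |η(k₁)|² + 2 |η(k₂)|²`. For the lower bound
keep only `‖k₂‖ ≥ 3 ⟨k₁⟩` and use `|η(k₁)|² ≤ 2 |η(k₁) - η(k₂)|² + 2 |η(k₂)|²`: the diagonal
term is `c_{[3,∞)} ‖η‖²`, and since `‖k₁‖ ≤ ⟨k₂⟩ / 3` on that region the cross term is at most
`2 c_{[0,1/3]} ‖η‖²`. Comparing both profiles with the volume of the unit ball shows
`2 c_{[0,1/3]} < c_{[3,∞)}`.
-/

open MeasureTheory Real Metric Module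
open scoped RealInnerProductSpace ENNReal

theorem lintegral_comp_inv_smul {E : Type*} [NormedAddCommGroup E] [NormedSpace ℝ E]
    [MeasurableSpace E] [BorelSpace E] [FiniteDimensional ℝ E] (μ : Measure E)
    [μ.IsAddHaarMeasure] (f : E → ℝ≥0∞) {R : ℝ} (hR : 0 < R) :
    ∫⁻ x, f (R⁻¹ • x) ∂μ = ENNReal.ofReal (R ^ finrank ℝ E) * ∫⁻ x, f x ∂μ := by
  have hR' : R⁻¹ ≠ 0 := inv_ne_zero hR.ne'
  have h := lintegral_map_equiv (μ := μ) f (MeasurableEquiv.smul₀ R⁻¹ hR')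
  rw [MeasurableEquiv.coe_smul₀, Measure.map_addHaar_smul μ hR', lintegral_smul_measure, inv_pow,
    inv_inv, abs_of_pos (by positivity)] at h
  exact h.symm

theorem integral_integral_eq_toReal_lintegral_lintegral {α β : Type*} [MeasurableSpace α]
    [MeasurableSpace β] {μ : Measure α} {ν : Measure β} [SFinite ν] {f : α → β → ℝ}
    (hf : Measurable (Function.uncurry f)) (hf₀ : ∀ a b, 0 ≤ f a b)
    (hfin : ∫⁻ a, ∫⁻ b, ENNReal.ofReal (f a b) ∂ν ∂μ ≠ ∞) :
    ∫ a, ∫ b, f a b ∂ν ∂μ = (∫⁻ a, ∫⁻ b, ENNReal.ofReal (f a b) ∂ν ∂μ).toReal := by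
  have hinner : Measurable fun a => ∫⁻ b, ENNReal.ofReal (f a b) ∂ν :=
    hf.ennreal_ofReal.lintegral_prod_right
  rw [← integral_toReal hinner.aemeasurable (ae_lt_top hinner hfin)]
  refine integral_congr_ae (Filter.Eventually.of_forall fun a => ?_)
  exact integral_eq_lintegral_of_nonneg_ae (Filter.Eventually.of_forall (hf₀ a))
    hf.of_uncurry_left.aestronglyMeasurable

local notation "ℝ³" => EuclideanSpace ℝ (Fin 3)

noncomputable section

def radialProfile (s : Set ℝ) : ℝ≥0∞ :=
  ∫⁻ u : ℝ³, s.indicator 1 ‖u‖ * ENNReal.ofReal (((‖u‖ ^ 2 + 1) ^ 2)⁻¹)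

theorem lintegral_indicator_mul_inv_sq_norm_sq_add_sq (s : Set ℝ) {L : ℝ} (hL : 0 < L) :
    ∫⁻ q : ℝ³, s.indicator 1 (‖q‖ / L) * ENNReal.ofReal (((‖q‖ ^ 2 + L ^ 2) ^ 2)⁻¹)
      = (ENNReal.ofReal L)⁻¹ * radialProfile s := by
  have hscaled : ∀ q : ℝ³, s.indicator 1 ‖L⁻¹ • q‖ * ENNReal.ofReal (((‖L⁻¹ • q‖ ^ 2 + 1) ^ 2)⁻¹)
      = ENNReal.ofReal (L ^ 4) *
        (s.indicator 1 (‖q‖ / L) * ENNReal.ofReal (((‖q‖ ^ 2 + L ^ 2) ^ 2)⁻¹)) := by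
    intro q
    have hq : ‖L⁻¹ • q‖ = ‖q‖ / L := by
      rw [norm_smul, norm_inv, norm_of_nonneg hL.le, inv_mul_eq_div]
    rw [hq, mul_left_comm, ← ENNReal.ofReal_mul (by positivity)]
    congr 2
    field_simp
  have h := lintegral_comp_inv_smul (volume : Measure ℝ³)
    (fun u => s.indicator 1 ‖u‖ * ENNReal.ofReal (((‖u‖ ^ 2 + 1) ^ 2)⁻¹)) hL
  simp only [hscaled, finrank_euclideanSpace_fin] at h
  rw [lintegral_const_mul' _ _ ENNReal.ofReal_ne_top] at h
  have hL4 : ENNReal.ofReal (L ^ 4) ≠ 0 := by simp [hL]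
  rw [← ENNReal.inv_mul_cancel_left (b := ∫⁻ q : ℝ³, _) hL4 ENNReal.ofReal_ne_top, h, radialProfile,
    ← mul_assoc, ← ENNReal.ofReal_inv_of_pos (by positivity), ← ENNReal.ofReal_mul (by positivity),
    ← ENNReal.ofReal_inv_of_pos hL]
  congr 2
  field_simp

theorem indicator_one_le_one (s : Set ℝ) (x : ℝ) : s.indicator (1 : ℝ → ℝ≥0∞) x ≤ 1 :=
  Set.indicator_le_self' (fun _ _ => zero_le) x

theorem radialProfile_lt_top (s : Set ℝ) : radialProfile s < ∞ := by
  have hbound : ∀ u : ℝ³, s.indicator 1 ‖u‖ * ENNReal.ofReal (((‖u‖ ^ 2 + 1) ^ 2)⁻¹)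
      ≤ 4 * ENNReal.ofReal ((1 + ‖u‖) ^ (-4 : ℝ)) := by
    intro u
    calc s.indicator 1 ‖u‖ * ENNReal.ofReal (((‖u‖ ^ 2 + 1) ^ 2)⁻¹)
        ≤ 1 * ENNReal.ofReal (((‖u‖ ^ 2 + 1) ^ 2)⁻¹) := by gcongr; exact indicator_one_le_one s _
      _ ≤ 4 * ENNReal.ofReal ((1 + ‖u‖) ^ (-4 : ℝ)) := by
        rw [one_mul, ← ENNReal.ofReal_ofNat 4, ← ENNReal.ofReal_mul (by norm_num)]
        gcongr
        rw [rpow_neg (by positivity), rpow_ofNat, ← div_eq_mul_inv, le_div_iff₀ (by positivity),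
          inv_mul_eq_div, div_le_iff₀ (by positivity)]
        nlinarith [sq_nonneg (1 - ‖u‖), norm_nonneg u]
  calc radialProfile s ≤ ∫⁻ u : ℝ³, 4 * ENNReal.ofReal ((1 + ‖u‖) ^ (-4 : ℝ)) :=
        lintegral_mono hbound
    _ < ∞ := by
        rw [lintegral_const_mul' _ _ (by norm_num)]
        refine ENNReal.mul_lt_top (by norm_num) (finite_integral_one_add_norm ?_)
        rw [finrank_euclideanSpace_fin]
        norm_num

theorem radialProfile_Iic_le :
    radialProfile (Set.Iic (1 / 3)) ≤ ENNReal.ofReal (1 / 27) * volume (ball (0 : ℝ³) 1) := by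
  calc radialProfile (Set.Iic (1 / 3))
      ≤ ∫⁻ u : ℝ³, (closedBall (0 : ℝ³) (1 / 3)).indicator 1 u := by
        refine lintegral_mono fun u => ?_
        by_cases hu : ‖u‖ ≤ 1 / 3
        · rw [Set.indicator_of_mem (Set.mem_Iic.2 hu),
            Set.indicator_of_mem (mem_closedBall_zero_iff.2 hu),
            Pi.one_apply, Pi.one_apply, one_mul, ENNReal.ofReal_le_one]
          exact inv_le_one_of_one_le₀ (by nlinarith [sq_nonneg ‖u‖])
        · rw [Set.indicator_of_notMem (by simpa using hu), zero_mul]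
          exact zero_le
    _ = volume (closedBall (0 : ℝ³) (1 / 3)) := lintegral_indicator_one measurableSet_closedBall
    _ = ENNReal.ofReal (1 / 27) * volume (ball (0 : ℝ³) 1) := by
        rw [Measure.addHaar_closedBall _ _ (by norm_num), finrank_euclideanSpace_fin]
        norm_num

theorem radialProfile_Ici_ge :
    ENNReal.ofReal (37 / 289) * volume (ball (0 : ℝ³) 1) ≤ radialProfile (Set.Ici 3) := by
  -- on the shell `3 ≤ ‖u‖ ≤ 4` the weight is at least `1 / 17 ^ 2`
  set shell : Set ℝ³ := closedBall 0 4 \ ball 0 3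
  have hshell : volume shell = ENNReal.ofReal 37 * volume (ball (0 : ℝ³) 1) := by
    rw [measure_sdiff (ball_subset_closedBall.trans (closedBall_subset_closedBall (by norm_num)))
      measurableSet_ball.nullMeasurableSet measure_ball_lt_top.ne,
      Measure.addHaar_closedBall _ _ (by norm_num : (0 : ℝ) ≤ 4),
      Measure.addHaar_ball _ _ (by norm_num : (0 : ℝ) ≤ 3),
      finrank_euclideanSpace_fin, ← ENNReal.sub_mul (fun _ _ => measure_ball_lt_top.ne),
      ← ENNReal.ofReal_sub _ (by norm_num)]
    norm_num
  calc ENNReal.ofReal (37 / 289) * volume (ball (0 : ℝ³) 1)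
      = ∫⁻ u : ℝ³, shell.indicator (fun _ => ENNReal.ofReal (1 / 289)) u := by
        rw [lintegral_indicator_const (measurableSet_closedBall.diff measurableSet_ball), hshell,
          ← mul_assoc, ← ENNReal.ofReal_mul (by norm_num)]
        norm_num
    _ ≤ radialProfile (Set.Ici 3) := by
        refine lintegral_mono fun u => ?_
        by_cases hu : u ∈ shell
        · have h4 : ‖u‖ ≤ 4 := by simpa using hu.1
          have h3 : 3 ≤ ‖u‖ := by simpa using hu.2
          rw [Set.indicator_of_mem hu, Set.indicator_of_mem (Set.mem_Ici.2 h3), Pi.one_apply,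
            one_mul]
          gcongr
          rw [one_div, inv_le_inv₀ (by norm_num) (by positivity)]
          have : ‖u‖ ^ 2 + 1 ≤ 17 := by nlinarith
          nlinarith
        · rw [Set.indicator_of_notMem hu]
          exact zero_le

theorem two_mul_radialProfile_Iic_lt :
    2 * radialProfile (Set.Iic (1 / 3)) < radialProfile (Set.Ici 3) := by
  have hball : volume (ball (0 : ℝ³) 1) ≠ 0 := (measure_ball_pos _ _ one_pos).ne'
  calc 2 * radialProfile (Set.Iic (1 / 3))
      ≤ 2 * (ENNReal.ofReal (1 / 27) * volume (ball (0 : ℝ³) 1)) := by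
        gcongr; exact radialProfile_Iic_le
    _ = ENNReal.ofReal (2 / 27) * volume (ball (0 : ℝ³) 1) := by
        rw [show (2 / 27 : ℝ) = 2 * (1 / 27) by norm_num, ENNReal.ofReal_mul (by norm_num),
          ENNReal.ofReal_ofNat, mul_assoc]
    _ < ENNReal.ofReal (37 / 289) * volume (ball (0 : ℝ³) 1) :=
        ENNReal.mul_lt_mul_left hball measure_ball_lt_top.ne
          ((ENNReal.ofReal_lt_ofReal_iff (by norm_num)).2 (by norm_num))
    _ ≤ radialProfile (Set.Ici 3) := radialProfile_Ici_ge

def japaneseBracket (lam : ℝ) (k : ℝ³) : ℝ := √(‖k‖ ^ 2 + lam)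

def invSqKernel (lam : ℝ) (k₁ k₂ : ℝ³) : ℝ≥0∞ :=
  ENNReal.ofReal (((‖k₁‖ ^ 2 + ‖k₂‖ ^ 2 + lam) ^ 2)⁻¹)

section Kernel

variable {lam : ℝ}

theorem japaneseBracket_pos (hlam : 0 < lam) (k : ℝ³) : 0 < japaneseBracket lam k :=
  sqrt_pos.2 (by positivity)

theorem norm_le_japaneseBracket (hlam : 0 ≤ lam) (k : ℝ³) : ‖k‖ ≤ japaneseBracket lam k :=
  le_sqrt_of_sq_le (by linarith)

theorem measurable_japaneseBracket : Measurable (japaneseBracket lam) := by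
  unfold japaneseBracket; fun_prop

theorem invSqKernel_comm (k₁ k₂ : ℝ³) : invSqKernel lam k₁ k₂ = invSqKernel lam k₂ k₁ := by
  rw [invSqKernel, invSqKernel, add_comm (‖k₁‖ ^ 2)]

theorem measurable_invSqKernel : Measurable (Function.uncurry (invSqKernel lam)) := by
  unfold Function.uncurry invSqKernel; fun_prop

theorem lintegral_indicator_mul_invSqKernel (hlam : 0 < lam) (s : Set ℝ) (k₁ : ℝ³) :
    ∫⁻ k₂, s.indicator 1 (‖k₂‖ / japaneseBracket lam k₁) * invSqKernel lam k₁ k₂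
      = (ENNReal.ofReal (japaneseBracket lam k₁))⁻¹ * radialProfile s := by
  rw [← lintegral_indicator_mul_inv_sq_norm_sq_add_sq s (japaneseBracket_pos hlam k₁)]
  refine lintegral_congr fun k₂ => ?_
  rw [invSqKernel, japaneseBracket, sq_sqrt (by positivity), add_left_comm, ← add_assoc]

theorem lintegral_lintegral_mul_indicator_mul_invSqKernel (hlam : 0 < lam) {s : Set ℝ}
    (hs : MeasurableSet s) (f : ℝ³ → ℝ≥0∞) :
    ∫⁻ k₁, ∫⁻ k₂, f k₁ * (s.indicator 1 (‖k₂‖ / japaneseBracket lam k₁) * invSqKernel lam k₁ k₂)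
      = radialProfile s * ∫⁻ k, f k / ENNReal.ofReal (japaneseBracket lam k) := by
  rw [← lintegral_const_mul' _ _ (radialProfile_lt_top s).ne]
  refine lintegral_congr fun k₁ => ?_
  have hmeas : Measurable fun k₂ : ℝ³ =>
      s.indicator 1 (‖k₂‖ / japaneseBracket lam k₁) * invSqKernel lam k₁ k₂ :=
    ((measurable_one.indicator hs).comp (measurable_norm.div_const _)).mul
      measurable_invSqKernel.of_uncurry_left
  rw [lintegral_const_mul _ hmeas, lintegral_indicator_mul_invSqKernel hlam, div_eq_mul_inv]
  ring

theorem lintegral_lintegral_add_mul_invSqKernel (hlam : 0 < lam) {f : ℝ³ → ℝ≥0∞}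
    (hf : Measurable f) :
    ∫⁻ k₁, ∫⁻ k₂, (f k₁ + f k₂) * invSqKernel lam k₁ k₂
      = 2 * radialProfile Set.univ * ∫⁻ k, f k / ENNReal.ofReal (japaneseBracket lam k) := by
  have hdiag := lintegral_lintegral_mul_indicator_mul_invSqKernel hlam MeasurableSet.univ f
  simp only [Set.indicator_univ, Pi.one_apply, one_mul] at hdiag
  have hmeas₁ : Measurable (Function.uncurry fun k₁ k₂ => f k₁ * invSqKernel lam k₁ k₂) :=
    (hf.comp measurable_fst).mul measurable_invSqKernel
  have hmeas₂ : Measurable (Function.uncurry fun k₁ k₂ => f k₂ * invSqKernel lam k₁ k₂) :=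
    (hf.comp measurable_snd).mul measurable_invSqKernel
  calc ∫⁻ k₁, ∫⁻ k₂, (f k₁ + f k₂) * invSqKernel lam k₁ k₂
      = (∫⁻ k₁, ∫⁻ k₂, f k₁ * invSqKernel lam k₁ k₂)
        + ∫⁻ k₁, ∫⁻ k₂, f k₂ * invSqKernel lam k₁ k₂ := by
        rw [← lintegral_add_left hmeas₁.lintegral_prod_right]
        refine lintegral_congr fun k₁ => ?_
        rw [← lintegral_add_left hmeas₁.of_uncurry_left]
        simp only [add_mul]
    _ = (∫⁻ k₁, ∫⁻ k₂, f k₁ * invSqKernel lam k₁ k₂)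
        + ∫⁻ k₁, ∫⁻ k₂, f k₁ * invSqKernel lam k₁ k₂ := by
        rw [lintegral_lintegral_swap hmeas₂.aemeasurable]
        simp only [invSqKernel_comm _ (_ : ℝ³)]
    _ = _ := by rw [hdiag, ← two_mul, mul_assoc]

end Kernel

section QuadForm

variable {E : Type*} [NormedAddCommGroup E] [InnerProductSpace ℝ E] {m lam : ℝ}

def quadForm (m lam : ℝ) (k₁ k₂ : E) : ℝ := ‖k₁‖ ^ 2 + ‖k₂‖ ^ 2 + 2 / (m + 1) * ⟪k₁, k₂⟫ + lam

theorem quadForm_eq (hm : m + 1 ≠ 0) (k₁ k₂ : E) :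
    quadForm m lam k₁ k₂
      = m / (m + 1) * (‖k₁‖ ^ 2 + ‖k₂‖ ^ 2 + lam) + (‖k₁ + k₂‖ ^ 2 + lam) / (m + 1) := by
  rw [quadForm, norm_add_sq_real]
  field_simp
  ring

theorem mul_le_quadForm (hm : 0 < m) (hlam : 0 ≤ lam) (k₁ k₂ : E) :
    m / (m + 1) * (‖k₁‖ ^ 2 + ‖k₂‖ ^ 2 + lam) ≤ quadForm m lam k₁ k₂ := by
  rw [quadForm_eq (by linarith)]
  exact le_add_of_nonneg_right (by positivity)

theorem quadForm_le (hm : 0 ≤ m) (hlam : 0 ≤ lam) (k₁ k₂ : E) :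
    quadForm m lam k₁ k₂ ≤ 2 * (‖k₁‖ ^ 2 + ‖k₂‖ ^ 2 + lam) := by
  have hinner : ⟪k₁, k₂⟫ ≤ ‖k₁‖ * ‖k₂‖ := real_inner_le_norm k₁ k₂
  have hamgm := two_mul_le_add_sq ‖k₁‖ ‖k₂‖
  have hcoef : 2 / (m + 1) ≤ 2 := div_le_self zero_le_two (by linarith)
  have hcross : 2 / (m + 1) * ⟪k₁, k₂⟫ ≤ ‖k₁‖ ^ 2 + ‖k₂‖ ^ 2 := by
    calc 2 / (m + 1) * ⟪k₁, k₂⟫ ≤ 2 / (m + 1) * (‖k₁‖ * ‖k₂‖) := by gcongr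
      _ ≤ 2 * (‖k₁‖ * ‖k₂‖) := by gcongr
      _ ≤ ‖k₁‖ ^ 2 + ‖k₂‖ ^ 2 := by linarith
  rw [quadForm]
  linarith

theorem quadForm_pos (hm : 0 < m) (hlam : 0 < lam) (k₁ k₂ : E) : 0 < quadForm m lam k₁ k₂ :=
  (by positivity : 0 < m / (m + 1) * (‖k₁‖ ^ 2 + ‖k₂‖ ^ 2 + lam)).trans_le
    (mul_le_quadForm hm hlam.le k₁ k₂)

variable {F : Type*} [NormedAddCommGroup F]

theorem sq_norm_add_le (a b : F) : ‖a + b‖ ^ 2 ≤ 2 * (‖a‖ ^ 2 + ‖b‖ ^ 2) :=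
  (pow_le_pow_left₀ (norm_nonneg _) (norm_add_le a b) 2).trans add_sq_le

theorem sq_norm_sub_div_sq_quadForm_le (hm : 0 < m) (hlam : 0 < lam) (a b : F) (k₁ k₂ : E) :
    ‖a - b‖ ^ 2 / quadForm m lam k₁ k₂ ^ 2
      ≤ 2 * ((m + 1) / m) ^ 2 * ((‖a‖ ^ 2 + ‖b‖ ^ 2) * ((‖k₁‖ ^ 2 + ‖k₂‖ ^ 2 + lam) ^ 2)⁻¹) := by
  have hsub : ‖a - b‖ ^ 2 ≤ 2 * (‖a‖ ^ 2 + ‖b‖ ^ 2) := by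
    simpa [sub_eq_add_neg] using sq_norm_add_le a (-b)
  calc ‖a - b‖ ^ 2 / quadForm m lam k₁ k₂ ^ 2
      ≤ 2 * (‖a‖ ^ 2 + ‖b‖ ^ 2) / (m / (m + 1) * (‖k₁‖ ^ 2 + ‖k₂‖ ^ 2 + lam)) ^ 2 := by
        gcongr
        exact mul_le_quadForm hm hlam.le k₁ k₂
    _ = _ := by
        field_simp

theorem sq_norm_mul_inv_le_sub_div_quadForm (hm : 0 < m) (hlam : 0 < lam) (a b : F) (k₁ k₂ : E) :
    ‖a‖ ^ 2 * ((‖k₁‖ ^ 2 + ‖k₂‖ ^ 2 + lam) ^ 2)⁻¹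
      ≤ 8 * (‖a - b‖ ^ 2 / quadForm m lam k₁ k₂ ^ 2)
        + 2 * (‖b‖ ^ 2 * ((‖k₁‖ ^ 2 + ‖k₂‖ ^ 2 + lam) ^ 2)⁻¹) := by
  have hadd : ‖a‖ ^ 2 ≤ 2 * (‖a - b‖ ^ 2 + ‖b‖ ^ 2) := by
    simpa using sq_norm_add_le (a - b) b
  have hQ := quadForm_pos hm hlam k₁ k₂
  have hinv : ((‖k₁‖ ^ 2 + ‖k₂‖ ^ 2 + lam) ^ 2)⁻¹ ≤ 4 / quadForm m lam k₁ k₂ ^ 2 := by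
    rw [le_div_iff₀ (by positivity), inv_mul_le_iff₀ (by positivity)]
    nlinarith [quadForm_le hm.le hlam.le k₁ k₂]
  calc ‖a‖ ^ 2 * ((‖k₁‖ ^ 2 + ‖k₂‖ ^ 2 + lam) ^ 2)⁻¹
      ≤ 2 * ‖a - b‖ ^ 2 * ((‖k₁‖ ^ 2 + ‖k₂‖ ^ 2 + lam) ^ 2)⁻¹
        + 2 * (‖b‖ ^ 2 * ((‖k₁‖ ^ 2 + ‖k₂‖ ^ 2 + lam) ^ 2)⁻¹) := by
        rw [← mul_assoc, ← add_mul]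
        gcongr
        linarith
    _ ≤ 2 * ‖a - b‖ ^ 2 * (4 / quadForm m lam k₁ k₂ ^ 2)
        + 2 * (‖b‖ ^ 2 * ((‖k₁‖ ^ 2 + ‖k₂‖ ^ 2 + lam) ^ 2)⁻¹) := by gcongr
    _ = _ := by ring

end QuadForm

def hMinusHalfNormSq (lam : ℝ) (η : ℝ³ → ℂ) : ℝ≥0∞ :=
  ∫⁻ k, ENNReal.ofReal (‖η k‖ ^ 2 / japaneseBracket lam k)

def greenIntegrand (m lam : ℝ) (η : ℝ³ → ℂ) (k₁ k₂ : ℝ³) : ℝ :=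
  ‖(η k₁ - η k₂) / (quadForm m lam k₁ k₂ : ℂ)‖ ^ 2

def greenNormSq (m lam : ℝ) (η : ℝ³ → ℂ) : ℝ≥0∞ :=
  ∫⁻ k₁, ∫⁻ k₂, ENNReal.ofReal (greenIntegrand m lam η k₁ k₂)

section Bounds

variable {m lam : ℝ} {η : ℝ³ → ℂ}

theorem sq_norm_div_ofReal (z : ℂ) (x : ℝ) : ‖z / (x : ℂ)‖ ^ 2 = ‖z‖ ^ 2 / x ^ 2 := by
  rw [norm_div, Complex.norm_real, norm_eq_abs, div_pow, sq_abs]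

theorem hMinusHalfNormSq_eq (hlam : 0 < lam) (η : ℝ³ → ℂ) :
    hMinusHalfNormSq lam η
      = ∫⁻ k, ENNReal.ofReal (‖η k‖ ^ 2) / ENNReal.ofReal (japaneseBracket lam k) :=
  lintegral_congr fun k => ENNReal.ofReal_div_of_pos (japaneseBracket_pos hlam k)

theorem measurable_greenIntegrand (hη : Measurable η) :
    Measurable (Function.uncurry (greenIntegrand m lam η)) := by
  unfold Function.uncurry greenIntegrand quadForm
  have : Measurable fun p : ℝ³ × ℝ³ => ⟪p.1, p.2⟫ := continuous_inner.measurable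
  fun_prop

theorem ofReal_greenIntegrand_le (hm : 0 < m) (hlam : 0 < lam) (η : ℝ³ → ℂ) (k₁ k₂ : ℝ³) :
    ENNReal.ofReal (greenIntegrand m lam η k₁ k₂)
      ≤ ENNReal.ofReal (2 * ((m + 1) / m) ^ 2) *
        ((ENNReal.ofReal (‖η k₁‖ ^ 2) + ENNReal.ofReal (‖η k₂‖ ^ 2)) * invSqKernel lam k₁ k₂) := by
  rw [invSqKernel, ← ENNReal.ofReal_add (by positivity) (by positivity),
    ← ENNReal.ofReal_mul (by positivity), ← ENNReal.ofReal_mul (by positivity),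
    greenIntegrand, sq_norm_div_ofReal]
  exact ENNReal.ofReal_le_ofReal (sq_norm_sub_div_sq_quadForm_le hm hlam _ _ k₁ k₂)

theorem greenNormSq_le (hm : 0 < m) (hlam : 0 < lam) (hη : Measurable η) :
    greenNormSq m lam η
      ≤ ENNReal.ofReal (2 * ((m + 1) / m) ^ 2) *
        (2 * (radialProfile Set.univ * hMinusHalfNormSq lam η)) := by
  calc greenNormSq m lam η
      ≤ ∫⁻ k₁, ∫⁻ k₂, ENNReal.ofReal (2 * ((m + 1) / m) ^ 2) *
          ((ENNReal.ofReal (‖η k₁‖ ^ 2) + ENNReal.ofReal (‖η k₂‖ ^ 2)) * invSqKernel lam k₁ k₂) :=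
        lintegral_mono fun k₁ => lintegral_mono fun k₂ => ofReal_greenIntegrand_le hm hlam η k₁ k₂
    _ = _ := by
        simp only [lintegral_const_mul' _ _ ENNReal.ofReal_ne_top]
        rw [lintegral_lintegral_add_mul_invSqKernel hlam (by fun_prop), hMinusHalfNormSq_eq hlam,
          mul_assoc]

theorem indicator_Ici_le_indicator_Iic (hlam : 0 < lam) (k₁ k₂ : ℝ³) :
    (Set.Ici 3).indicator (1 : ℝ → ℝ≥0∞) (‖k₂‖ / japaneseBracket lam k₁)
      ≤ (Set.Iic (1 / 3)).indicator 1 (‖k₁‖ / japaneseBracket lam k₂) := by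
  by_cases hfar : 3 ≤ ‖k₂‖ / japaneseBracket lam k₁
  · have hnear : ‖k₁‖ / japaneseBracket lam k₂ ≤ 1 / 3 := by
      rw [le_div_iff₀ (japaneseBracket_pos hlam k₁)] at hfar
      rw [div_le_iff₀ (japaneseBracket_pos hlam k₂)]
      linarith [norm_le_japaneseBracket hlam.le k₁, norm_le_japaneseBracket hlam.le k₂]
    rw [Set.indicator_of_mem (Set.mem_Ici.2 hfar), Set.indicator_of_mem (Set.mem_Iic.2 hnear)]
    rfl
  · rw [Set.indicator_of_notMem (fun h => hfar (Set.mem_Ici.1 h))]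
    exact zero_le

theorem ofReal_mul_invSqKernel_le (hm : 0 < m) (hlam : 0 < lam) (η : ℝ³ → ℂ) (k₁ k₂ : ℝ³) :
    ENNReal.ofReal (‖η k₁‖ ^ 2) * invSqKernel lam k₁ k₂
      ≤ 8 * ENNReal.ofReal (greenIntegrand m lam η k₁ k₂)
        + 2 * (ENNReal.ofReal (‖η k₂‖ ^ 2) * invSqKernel lam k₁ k₂) := by
  have h := ENNReal.ofReal_le_ofReal
    (sq_norm_mul_inv_le_sub_div_quadForm hm hlam (η k₁) (η k₂) k₁ k₂)
  rw [← sq_norm_div_ofReal, ENNReal.ofReal_add (by positivity) (by positivity),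
    ENNReal.ofReal_mul (by positivity), ENNReal.ofReal_mul (by positivity),
    ENNReal.ofReal_mul (by positivity), ENNReal.ofReal_mul (by positivity),
    ENNReal.ofReal_ofNat, ENNReal.ofReal_ofNat] at h
  exact h

theorem ofReal_mul_indicator_Ici_le (hm : 0 < m) (hlam : 0 < lam) (η : ℝ³ → ℂ) (k₁ k₂ : ℝ³) :
    ENNReal.ofReal (‖η k₁‖ ^ 2) *
        ((Set.Ici 3).indicator 1 (‖k₂‖ / japaneseBracket lam k₁) * invSqKernel lam k₁ k₂)
      ≤ 8 * ENNReal.ofReal (greenIntegrand m lam η k₁ k₂)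
        + 2 * (ENNReal.ofReal (‖η k₂‖ ^ 2) *
          ((Set.Iic (1 / 3)).indicator 1 (‖k₁‖ / japaneseBracket lam k₂) *
            invSqKernel lam k₂ k₁)) := by
  set far := (Set.Ici 3).indicator (1 : ℝ → ℝ≥0∞) (‖k₂‖ / japaneseBracket lam k₁)
  calc ENNReal.ofReal (‖η k₁‖ ^ 2) * (far * invSqKernel lam k₁ k₂)
      = far * (ENNReal.ofReal (‖η k₁‖ ^ 2) * invSqKernel lam k₁ k₂) := mul_left_comm _ _ _
    _ ≤ far * (8 * ENNReal.ofReal (greenIntegrand m lam η k₁ k₂)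
          + 2 * (ENNReal.ofReal (‖η k₂‖ ^ 2) * invSqKernel lam k₁ k₂)) := by
        gcongr
        exact ofReal_mul_invSqKernel_le hm hlam η k₁ k₂
    _ ≤ _ := by
        rw [mul_add]
        refine add_le_add (mul_le_of_le_one_left zero_le (indicator_one_le_one _ _)) ?_
        rw [mul_left_comm, mul_left_comm _ (ENNReal.ofReal _), invSqKernel_comm k₁]
        gcongr
        exact indicator_Ici_le_indicator_Iic hlam k₁ k₂

theorem radialProfile_Ici_mul_le_greenNormSq (hm : 0 < m) (hlam : 0 < lam) (hη : Measurable η) :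
    radialProfile (Set.Ici 3) * hMinusHalfNormSq lam η
      ≤ 8 * greenNormSq m lam η
        + 2 * (radialProfile (Set.Iic (1 / 3)) * hMinusHalfNormSq lam η) := by
  set f : ℝ³ → ℝ≥0∞ := fun k => ENNReal.ofReal (‖η k‖ ^ 2)
  set near : ℝ³ → ℝ³ → ℝ≥0∞ := fun k₁ k₂ =>
    (Set.Iic (1 / 3)).indicator 1 (‖k₁‖ / japaneseBracket lam k₂) * invSqKernel lam k₂ k₁
  have hgreen : Measurable
      (Function.uncurry fun k₁ k₂ => ENNReal.ofReal (greenIntegrand m lam η k₁ k₂)) :=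
    (measurable_greenIntegrand hη).ennreal_ofReal
  have hnear : Measurable (Function.uncurry fun k₁ k₂ => f k₂ * near k₁ k₂) := by
    have hf : Measurable f := by fun_prop
    have hind : Measurable fun p : ℝ³ × ℝ³ =>
        (Set.Iic (1 / 3)).indicator (1 : ℝ → ℝ≥0∞) (‖p.1‖ / japaneseBracket lam p.2) :=
      (measurable_one.indicator measurableSet_Iic).comp
        (measurable_fst.norm.div (measurable_japaneseBracket.comp measurable_snd))
    have hK : Measurable fun p : ℝ³ × ℝ³ => invSqKernel lam p.2 p.1 := by
      unfold invSqKernel; fun_prop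
    exact (hf.comp measurable_snd).mul (hind.mul hK)
  calc radialProfile (Set.Ici 3) * hMinusHalfNormSq lam η
      = ∫⁻ k₁, ∫⁻ k₂, f k₁ *
          ((Set.Ici 3).indicator 1 (‖k₂‖ / japaneseBracket lam k₁) * invSqKernel lam k₁ k₂) := by
        rw [lintegral_lintegral_mul_indicator_mul_invSqKernel hlam measurableSet_Ici,
          hMinusHalfNormSq_eq hlam]
    _ ≤ ∫⁻ k₁, ∫⁻ k₂,
          (8 * ENNReal.ofReal (greenIntegrand m lam η k₁ k₂) + 2 * (f k₂ * near k₁ k₂)) :=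
        lintegral_mono fun k₁ => lintegral_mono fun k₂ =>
          ofReal_mul_indicator_Ici_le hm hlam η k₁ k₂
    _ = 8 * greenNormSq m lam η + 2 * ∫⁻ k₁, ∫⁻ k₂, f k₂ * near k₁ k₂ := by
        rw [greenNormSq, ← lintegral_const_mul _ hgreen.lintegral_prod_right,
          ← lintegral_const_mul _ hnear.lintegral_prod_right,
          ← lintegral_add_left (hgreen.lintegral_prod_right.const_mul _)]
        refine lintegral_congr fun k₁ => ?_
        rw [lintegral_add_left (hgreen.of_uncurry_left.const_mul _),
          lintegral_const_mul _ hgreen.of_uncurry_left,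
          lintegral_const_mul _ hnear.of_uncurry_left]
    _ = 8 * greenNormSq m lam η
          + 2 * (radialProfile (Set.Iic (1 / 3)) * hMinusHalfNormSq lam η) := by
        rw [lintegral_lintegral_swap hnear.aemeasurable,
          lintegral_lintegral_mul_indicator_mul_invSqKernel hlam measurableSet_Iic,
          hMinusHalfNormSq_eq hlam]

end Bounds

def lowerConst : ℝ :=
  ((radialProfile (Set.Ici 3)).toReal - 2 * (radialProfile (Set.Iic (1 / 3))).toReal) / 8

def upperConst (m : ℝ) : ℝ := 4 * ((m + 1) / m) ^ 2 * (radialProfile Set.univ).toReal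

theorem lowerConst_pos : 0 < lowerConst := by
  have h := ENNReal.toReal_strict_mono (radialProfile_lt_top _).ne two_mul_radialProfile_Iic_lt
  rw [ENNReal.toReal_mul, ENNReal.toReal_ofNat] at h
  rw [lowerConst]
  linarith

theorem toReal_greenNormSq_bounds {m lam : ℝ} {η : ℝ³ → ℂ} (hm : 0 < m) (hlam : 0 < lam)
    (hη : Measurable η) (hN : hMinusHalfNormSq lam η ≠ ∞) :
    greenNormSq m lam η ≠ ∞ ∧
      lowerConst * (hMinusHalfNormSq lam η).toReal ≤ (greenNormSq m lam η).toReal ∧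
      (greenNormSq m lam η).toReal ≤ upperConst m * (hMinusHalfNormSq lam η).toReal := by
  have hPN : ∀ s, radialProfile s * hMinusHalfNormSq lam η ≠ ∞ :=
    fun s => ENNReal.mul_ne_top (radialProfile_lt_top s).ne hN
  have hupper := greenNormSq_le hm hlam hη
  have hupper_fin : ENNReal.ofReal (2 * ((m + 1) / m) ^ 2) *
      (2 * (radialProfile Set.univ * hMinusHalfNormSq lam η)) ≠ ∞ :=
    ENNReal.mul_ne_top ENNReal.ofReal_ne_top (ENNReal.mul_ne_top ENNReal.ofNat_ne_top (hPN _))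
  have hT := ne_top_of_le_ne_top hupper_fin hupper
  have hlower := ENNReal.toReal_mono
    (ENNReal.add_ne_top.2 ⟨ENNReal.mul_ne_top ENNReal.ofNat_ne_top hT,
      ENNReal.mul_ne_top ENNReal.ofNat_ne_top (hPN _)⟩)
    (radialProfile_Ici_mul_le_greenNormSq hm hlam hη)
  replace hupper := ENNReal.toReal_mono hupper_fin hupper
  rw [ENNReal.toReal_add (ENNReal.mul_ne_top ENNReal.ofNat_ne_top hT)
    (ENNReal.mul_ne_top ENNReal.ofNat_ne_top (hPN _))] at hlower
  simp only [ENNReal.toReal_mul, ENNReal.toReal_ofNat,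
    ENNReal.toReal_ofReal (by positivity : (0 : ℝ) ≤ 2 * ((m + 1) / m) ^ 2)] at hlower hupper
  refine ⟨hT, ?_, ?_⟩
  · rw [lowerConst]
    linarith
  · rw [upperConst]
    linarith

end

theorem stmt16 (m : ℝ) (hm : 0 < m) :
    ∃ c₁ c₂ : ℝ, 0 < c₁ ∧ c₁ ≤ c₂ ∧
      ∀ lam : ℝ, 0 < lam →
        ∀ η : EuclideanSpace ℝ (Fin 3) → ℂ, Measurable η →
          Integrable
              (fun k : EuclideanSpace ℝ (Fin 3) =>
                ‖η k‖ ^ 2 / Real.sqrt (‖k‖ ^ 2 + lam)) →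
            c₁ * (∫ k : EuclideanSpace ℝ (Fin 3),
                ‖η k‖ ^ 2 / Real.sqrt (‖k‖ ^ 2 + lam)) ≤
              (∫ k₁ : EuclideanSpace ℝ (Fin 3), ∫ k₂ : EuclideanSpace ℝ (Fin 3),
                ‖(η k₁ - η k₂) /
                    ((‖k₁‖ ^ 2 + ‖k₂‖ ^ 2 + (2 / (m + 1)) * ⟪k₁, k₂⟫ + lam : ℝ) : ℂ)‖ ^ 2) ∧
              (∫ k₁ : EuclideanSpace ℝ (Fin 3), ∫ k₂ : EuclideanSpace ℝ (Fin 3),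
                ‖(η k₁ - η k₂) /
                    ((‖k₁‖ ^ 2 + ‖k₂‖ ^ 2 + (2 / (m + 1)) * ⟪k₁, k₂⟫ + lam : ℝ) : ℂ)‖ ^ 2) ≤
                c₂ * ∫ k : EuclideanSpace ℝ (Fin 3),
                  ‖η k‖ ^ 2 / Real.sqrt (‖k‖ ^ 2 + lam) := by
  refine ⟨lowerConst, max (upperConst m) lowerConst, lowerConst_pos, le_max_right _ _,
    fun lam hlam η hη hint => ?_⟩
  have hN : hMinusHalfNormSq lam η ≠ ∞ := hint.lintegral_lt_top.ne
  have hNr : (∫ k : ℝ³, ‖η k‖ ^ 2 / √(‖k‖ ^ 2 + lam)) = (hMinusHalfNormSq lam η).toReal :=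
    integral_eq_lintegral_of_nonneg_ae (ae_of_all _ fun k => by positivity)
      (by fun_prop : Measurable fun k : ℝ³ => ‖η k‖ ^ 2 / √(‖k‖ ^ 2 + lam)).aestronglyMeasurable
  obtain ⟨hT, hlower, hupper⟩ := toReal_greenNormSq_bounds hm hlam hη hN
  have hTr := integral_integral_eq_toReal_lintegral_lintegral (μ := volume) (ν := volume)
    (measurable_greenIntegrand (m := m) (lam := lam) hη) (fun _ _ => sq_nonneg _) hT
  simp only [greenIntegrand, quadForm] at hTr
  rw [hNr, hTr]
  exact ⟨hlower, hupper.trans (mul_le_mul_of_nonneg_right (le_max_left _ _) ENNReal.toReal_nonneg)⟩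
end

section
/- Let m > 0 and 0 < s < 1 satisfy the resonance equation π√(m(m+2))/(m+1) + ∫_{-1}^1 t ∫_0^∞ p^s/(p²+1+(2/(m+1))tp) dp dt = 0. Then for every R > 0, ∫_R^∞ (1/p) [ 2π² √(m(m+2))/(m+1) + 2π ∫_{-1}^1 t ∫_{R/p}^∞ q^{−s}/(q²+1+(2/(m+1))qt) dq dt ] dp = −2π ∫_1^∞ (1/p) ∫_{-1}^1 t ∫_0^{1/p} q^{−s}/(q²+1+(2/(m+1))qt) dq dt dp, and this value is independent of R. -/
open MeasureTheory intervalIntegral Real Set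

/-!
Splitting `∫_{R/p}^∞ = ∫_0^∞ - ∫_0^{R/p}` in the inner integral, the resonance equation (read
through the inversion `q ↦ 1/q`, which turns `p ^ s` into `q ^ (-s)`) cancels the constant term of
the bracket, leaving `-2π ∫_{-1}^1 t ∫_0^{R/p}`; the measure `dp/p` is invariant under `p ↦ R p`,
which removes `R`. The splitting is legitimate because for `|a| < 2` the denominator
`q² + 1 + a q t` dominates `(1 - |a|/2)(q² + 1)`, and `q ^ (-s) / (q² + 1)` is integrable on
`(0, ∞)` for `0 < s < 1`.
-/

section Kernel

variable {a s t q : ℝ}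

theorem mul_sq_add_one_le_sq_add_one_add (ht : |t| ≤ 1) (hq : 0 ≤ q) :
    (1 - |a| / 2) * (q ^ 2 + 1) ≤ q ^ 2 + 1 + a * q * t := by
  have hat : -(|a| * q) ≤ a * q * t := by
    have : |a * q * t| ≤ |a| * q := by
      rw [abs_mul, abs_mul, abs_of_nonneg hq]
      exact mul_le_of_le_one_right (by positivity) ht
    linarith [neg_abs_le (a * q * t)]
  nlinarith [sq_nonneg (q - 1), abs_nonneg a]

theorem norm_rpow_neg_div_le (ha : |a| < 2) (ht : |t| ≤ 1) (hq : 0 < q) :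
    ‖q ^ (-s) / (q ^ 2 + 1 + a * q * t)‖ ≤ (1 - |a| / 2)⁻¹ * (q ^ (-s) / (q ^ 2 + 1)) := by
  have hlow : 0 < (1 - |a| / 2) * (q ^ 2 + 1) := by
    have : 0 < 1 - |a| / 2 := by linarith
    positivity
  have hden := mul_sq_add_one_le_sq_add_one_add (a := a) ht hq.le
  calc ‖q ^ (-s) / (q ^ 2 + 1 + a * q * t)‖
      = q ^ (-s) / (q ^ 2 + 1 + a * q * t) :=
        Real.norm_of_nonneg (div_nonneg (by positivity) (hlow.trans_le hden).le)
    _ ≤ q ^ (-s) / ((1 - |a| / 2) * (q ^ 2 + 1)) :=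
        div_le_div_of_nonneg_left (by positivity) hlow hden
    _ = (1 - |a| / 2)⁻¹ * (q ^ (-s) / (q ^ 2 + 1)) := by
        rw [div_mul_eq_div_div_swap, div_eq_inv_mul _ (1 - |a| / 2)]

theorem integrableOn_rpow_neg_div_sq_add_one (hs0 : 0 < s) (hs1 : s < 1) :
    IntegrableOn (fun q : ℝ => q ^ (-s) / (q ^ 2 + 1)) (Ioi 0) := by
  have hmeas : AEStronglyMeasurable (fun q : ℝ => q ^ (-s) / (q ^ 2 + 1)) :=
    (by fun_prop : Measurable _).aestronglyMeasurable
  rw [← Ioc_union_Ioi_eq_Ioi zero_le_one]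
  refine IntegrableOn.union ?_ ?_
  · refine ((intervalIntegrable_iff_integrableOn_Ioc_of_le zero_le_one).mp
      (intervalIntegral.intervalIntegrable_rpow' (r := -s) (by linarith))).mono'
      hmeas.restrict ((ae_restrict_iff' measurableSet_Ioc).mpr (.of_forall fun q hq => ?_))
    have := rpow_nonneg hq.1.le (-s)
    rw [Real.norm_of_nonneg (by positivity)]
    exact div_le_self this (by nlinarith)
  · refine (integrableOn_Ioi_rpow_of_lt (a := -2) (by norm_num) zero_lt_one).mono'
      hmeas.restrict ((ae_restrict_iff' measurableSet_Ioi).mpr (.of_forall fun q hq => ?_))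
    have hq1 : (1 : ℝ) < q := hq
    have := rpow_nonneg (zero_le_one.trans hq1.le) (-s)
    rw [Real.norm_of_nonneg (by positivity), rpow_neg_ofNat, zpow_neg, zpow_ofNat, ← one_div]
    exact div_le_div₀ zero_le_one (rpow_le_one_of_one_le_of_nonpos hq1.le (by linarith))
      (by positivity) (by linarith)

theorem integrableOn_rpow_neg_div (ha : |a| < 2) (hs0 : 0 < s) (hs1 : s < 1) (ht : |t| ≤ 1) :
    IntegrableOn (fun q : ℝ => q ^ (-s) / (q ^ 2 + 1 + a * q * t)) (Ioi 0) :=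
  ((integrableOn_rpow_neg_div_sq_add_one hs0 hs1).const_mul _).mono'
    (by fun_prop : Measurable _).aestronglyMeasurable
    ((ae_restrict_iff' measurableSet_Ioi).mpr
      (.of_forall fun _ hq => norm_rpow_neg_div_le ha ht hq))

theorem intervalIntegrable_mul_setIntegral_rpow_neg_div (ha : |a| < 2) (hs0 : 0 < s)
    (hs1 : s < 1) {S : Set ℝ} (hS : MeasurableSet S) (hSpos : S ⊆ Ioi 0) :
    IntervalIntegrable (fun t => t * ∫ q in S, q ^ (-s) / (q ^ 2 + 1 + a * q * t))
      volume (-1) 1 := by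
  set g : ℝ → ℝ := fun q => (1 - |a| / 2)⁻¹ * (q ^ (-s) / (q ^ 2 + 1))
  have hg : IntegrableOn g (Ioi 0) := (integrableOn_rpow_neg_div_sq_add_one hs0 hs1).const_mul _
  have hg_nonneg : ∀ q ∈ Ioi (0 : ℝ), 0 ≤ g q := fun q hq => by
    have : 0 < 1 - |a| / 2 := by linarith
    have := rpow_nonneg (le_of_lt hq) (-s)
    positivity
  have hmeas : StronglyMeasurable fun t : ℝ => ∫ q in S, q ^ (-s) / (q ^ 2 + 1 + a * q * t) :=
    StronglyMeasurable.integral_prod_right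
      (f := fun t q : ℝ => q ^ (-s) / (q ^ 2 + 1 + a * q * t))
      (by fun_prop : Measurable fun z : ℝ × ℝ =>
        z.2 ^ (-s) / (z.2 ^ 2 + 1 + a * z.2 * z.1)).stronglyMeasurable
  rw [intervalIntegrable_iff_integrableOn_Ioc_of_le (by norm_num)]
  refine (integrableOn_const (C := ∫ q in Ioi 0, g q) (by simp)).mono'
    (aestronglyMeasurable_id.mul hmeas.aestronglyMeasurable)
    ((ae_restrict_iff' measurableSet_Ioc).mpr (.of_forall fun t ht => ?_))
  have ht : |t| ≤ 1 := abs_le.mpr ⟨ht.1.le, ht.2⟩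
  calc ‖t * ∫ q in S, q ^ (-s) / (q ^ 2 + 1 + a * q * t)‖
      ≤ 1 * ∫ q in S, g q := by
        rw [norm_mul, Real.norm_eq_abs]
        refine mul_le_mul ht (norm_integral_le_of_norm_le (hg.mono_set hSpos) ?_)
          (norm_nonneg _) zero_le_one
        exact (ae_restrict_iff' hS).mpr
          (.of_forall fun q hq => norm_rpow_neg_div_le ha ht (hSpos hq))
    _ ≤ ∫ q in Ioi 0, g q := by
        rw [one_mul]
        exact setIntegral_mono_set hg ((ae_restrict_iff' measurableSet_Ioi).mpr
          (.of_forall hg_nonneg)) hSpos.eventuallyLE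

end Kernel

theorem integral_Ioi_comp_inv {E : Type*} [NormedAddCommGroup E] [NormedSpace ℝ E] (g : ℝ → E) :
    ∫ x in Ioi 0, (x ^ 2)⁻¹ • g x⁻¹ = ∫ y in Ioi 0, g y := by
  rw [← integral_comp_rpow_Ioi g (p := -1) (by norm_num)]
  refine setIntegral_congr_fun measurableSet_Ioi fun x (hx : 0 < x) => ?_
  norm_num [rpow_neg_one, rpow_neg_ofNat]

theorem setIntegral_Ioi_rpow_neg_div_eq_rpow_div (a s t : ℝ) :
    ∫ q in Ioi 0, q ^ (-s) / (q ^ 2 + 1 + a * q * t) =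
      ∫ p in Ioi 0, p ^ s / (p ^ 2 + 1 + a * t * p) := by
  rw [← integral_Ioi_comp_inv]
  refine setIntegral_congr_fun measurableSet_Ioi fun q (hq : 0 < q) => ?_
  rw [smul_eq_mul, inv_rpow hq.le, rpow_neg hq.le]
  field_simp
  ring

theorem integral_Ioi_one_div_mul_comp_div (g : ℝ → ℝ) {R : ℝ} (hR : 0 < R) :
    ∫ p in Ioi R, 1 / p * g (R / p) = ∫ p in Ioi 1, 1 / p * g (1 / p) := by
  have h := integral_comp_mul_left_Ioi (fun p => 1 / p * g (R / p)) 1 hR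
  rw [mul_one, smul_eq_mul] at h
  have hscale : ∀ p, 1 / (R * p) * g (R / (R * p)) = R⁻¹ * (1 / p * g (1 / p)) := fun p => by
    rw [div_mul_cancel_left₀ hR.ne']
    simp only [one_div, mul_inv, mul_assoc]
  simp only [hscale, MeasureTheory.integral_const_mul] at h
  exact (mul_left_cancel₀ (inv_ne_zero hR.ne') h).symm

theorem integral_mul_setIntegral_Ioi_eq_sub {a s u : ℝ} (ha : |a| < 2) (hs0 : 0 < s)
    (hs1 : s < 1) (hu : 0 < u) :
    ∫ t in (-1)..1, t * ∫ q in Ioi u, q ^ (-s) / (q ^ 2 + 1 + a * q * t) =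
      (∫ t in (-1)..1, t * ∫ q in Ioi 0, q ^ (-s) / (q ^ 2 + 1 + a * q * t)) -
        ∫ t in (-1)..1, t * ∫ q in 0..u, q ^ (-s) / (q ^ 2 + 1 + a * q * t) := by
  simp only [intervalIntegral.integral_of_le hu.le]
  rw [← intervalIntegral.integral_sub
    (intervalIntegrable_mul_setIntegral_rpow_neg_div ha hs0 hs1 measurableSet_Ioi subset_rfl)
    (intervalIntegrable_mul_setIntegral_rpow_neg_div ha hs0 hs1 measurableSet_Ioc
      Ioc_subset_Ioi_self)]
  refine intervalIntegral.integral_congr fun t ht => ?_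
  rw [uIcc_of_le (by norm_num)] at ht
  have hint := integrableOn_rpow_neg_div ha hs0 hs1 (abs_le.mpr ht)
  rw [← Ioc_union_Ioi_eq_Ioi hu.le] at hint ⊢
  rw [setIntegral_union (Ioc_disjoint_Ioi le_rfl) measurableSet_Ioi hint.left_of_union
    hint.right_of_union]
  ring

theorem stmt19 (m s : ℝ) (hm : 0 < m) (hs0 : 0 < s) (hs1 : s < 1)
    (hres :
      Real.pi * Real.sqrt (m * (m + 2)) / (m + 1) +
        (∫ t in (-1 : ℝ)..1,
          t * ∫ p in Set.Ioi (0 : ℝ), p ^ s / (p ^ 2 + 1 + (2 / (m + 1)) * t * p)) = 0) :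
    ∀ R : ℝ, 0 < R →
      (∫ p in Set.Ioi R,
          (1 / p) *
            (2 * Real.pi ^ 2 * Real.sqrt (m * (m + 2)) / (m + 1) +
              2 * Real.pi *
                ∫ t in (-1 : ℝ)..1,
                  t * ∫ q in Set.Ioi (R / p),
                    q ^ (-s) / (q ^ 2 + 1 + (2 / (m + 1)) * q * t))) =
        -2 * Real.pi *
          ∫ p in Set.Ioi (1 : ℝ),
            (1 / p) *
              ∫ t in (-1 : ℝ)..1,
                t * ∫ q in (0 : ℝ)..(1 / p),
                  q ^ (-s) / (q ^ 2 + 1 + (2 / (m + 1)) * q * t) := by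
  intro R hR
  have ha : |2 / (m + 1)| < 2 := by
    rw [abs_of_pos (by positivity), div_lt_iff₀ (by positivity)]
    linarith
  have hfull :
      ∫ t in (-1 : ℝ)..1, t * ∫ q in Ioi 0, q ^ (-s) / (q ^ 2 + 1 + 2 / (m + 1) * q * t) =
        -(π * √(m * (m + 2)) / (m + 1)) := by
    simp only [setIntegral_Ioi_rpow_neg_div_eq_rpow_div]
    linarith
  have hbracket : EqOn
      (fun p => 1 / p * (2 * π ^ 2 * √(m * (m + 2)) / (m + 1) + 2 * π *
        ∫ t in (-1 : ℝ)..1, t * ∫ q in Ioi (R / p), q ^ (-s) / (q ^ 2 + 1 + 2 / (m + 1) * q * t)))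
      (fun p => -2 * π * (1 / p *
        ∫ t in (-1 : ℝ)..1, t * ∫ q in 0..R / p, q ^ (-s) / (q ^ 2 + 1 + 2 / (m + 1) * q * t)))
      (Ioi R) := fun p (hp : R < p) => by
    dsimp only
    rw [integral_mul_setIntegral_Ioi_eq_sub ha hs0 hs1 (div_pos hR (hR.trans hp)), hfull]
    ring
  rw [setIntegral_congr_fun measurableSet_Ioi hbracket, MeasureTheory.integral_const_mul,
    integral_Ioi_one_div_mul_comp_div (fun u => ∫ t in (-1 : ℝ)..1,
      t * ∫ q in 0..u, q ^ (-s) / (q ^ 2 + 1 + 2 / (m + 1) * q * t)) hR]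
end
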